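/- arXiv:2010.15765 — 7 statements merged into one kernel-verified Lean document; each statement's English description precedes it below -/
import Mathlib

section
/- (Theorem 1.7, optimal colorful fractional Helly theorem for d-collapsible complexes.) Let d ≥ 1 and let K be a d-collapsible simplicial complex whose vertex set N is partitioned into d+1 disjoint subsets N = N_1 ⊔ ⋯ ⊔ N_{d+1} with n_i := |N_i| ≥ 1. Let α ∈ (0,1]. If K contains at least α·n_1⋯n_{d+1} colorful d-faces, then there exists i ∈ {1,…,d+1} such that dim K[N_i] ≥ (1 − (1−α)^{1/(d+1)})·n_i − 1. -/
open scoped BigOperators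

/-- A (finite abstract) simplicial complex: a family of finite subsets of the vertex
type closed under taking subsets. -/
def IsComplex {V : Type*} [DecidableEq V] (K : Finset (Finset V)) : Prop :=
  ∀ A ∈ K, ∀ B ⊆ A, B ∈ K

/-- `K'` arises from `K` by an elementary `d`-collapse: there are faces `L, M ∈ K`
with `|L| ≤ d` (i.e. `dim L ≤ d - 1`) such that `M` is the unique inclusion-wise
maximal face of `K` containing `L` (equivalently, every face containing `L` is
contained in `M`), and `K'` is obtained from `K` by removing all faces containing `L`. -/
def ElemCollapse {V : Type*} [DecidableEq V] (d : ℕ) (K K' : Finset (Finset V)) : Prop :=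
  ∃ L M, L ∈ K ∧ M ∈ K ∧ L.card ≤ d ∧ (∀ A ∈ K, L ⊆ A → A ⊆ M) ∧
    K' = K.filter fun A => ¬ L ⊆ A

/-- `K` is `d`-collapsible: there is a sequence of elementary `d`-collapses from `K`
to the empty complex. -/
def Collapsible {V : Type*} [DecidableEq V] (d : ℕ) (K : Finset (Finset V)) : Prop :=
  Relation.ReflTransGen (ElemCollapse d) K ∅

/-!
Let `nᵢ = |Nᵢ|` and `fᵢ = dim K[Nᵢ] + 1`. At least `∏ (nᵢ - fᵢ)` colorful `d`-sets are
non-faces of `K`; as at most `(1 - α) ∏ nᵢ` are, some `i` has `nᵢ - fᵢ ≤ (1 - α)^{1/(d+1)} nᵢ`.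

The lower bound is linear algebra on functions of colorful sets, i.e. on `∏ᵢ Nᵢ`. Embed each
`Nᵢ` in `ℚ` and let `Pᵢ` be the functions on `Nᵢ` given by polynomials of degree `< fᵢ`; they
interpolate arbitrary values on each face of `K[Nᵢ]`. Undo the collapses one at a time: when
the faces containing `L`, all inside `M`, come back, the indicator `⊗ᵢ δ_{jᵢ}` of such a
colorful face `j` is congruent, modulo pure tensors with a factor in some `Pᵢ`, to a tensor
supported on sets containing `L` and leaving `M` in a color that `L` misses (there is one as
`|L| ≤ d`), hence on non-faces. So the indicators of the colorful non-faces and these pure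
tensors span everything. For `Cᵢ ⊆ Nᵢ` with `|Cᵢ| = fᵢ`, the tensor product of the maps
`g ↦ g - (interpolant of g on Cᵢ)` kills the pure tensors and fixes the indicators of the
`∏ (nᵢ - fᵢ)` colorful sets avoiding every `Cᵢ`, so the non-faces span at least that many
dimensions.
-/

open Finset Module

noncomputable section

theorem MultilinearMap.sub_mem_span_image_of_sub_mem {R ι : Type*} {M : ι → Type*} {N : Type*}
    [CommRing R] [Fintype ι] [DecidableEq ι] [∀ i, AddCommGroup (M i)] [∀ i, Module R (M i)]
    [AddCommGroup N] [Module R N] (f : MultilinearMap R M N) {P : ∀ i, Submodule R (M i)}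
    {x y : ∀ i, M i} (h : ∀ i, x i - y i ∈ P i) :
    f x - f y ∈ Submodule.span R (f '' {z | ∃ i, z i ∈ P i}) := by
  have hx : x = (x - y) + y := (sub_add_cancel x y).symm
  rw [hx, f.map_add_univ, ← Finset.add_sum_erase _ _ (mem_univ ∅), piecewise_empty,
    add_sub_cancel_left]
  refine Submodule.sum_mem _ fun s hs => Submodule.subset_span ⟨_, ?_, rfl⟩
  obtain ⟨i, hi⟩ := nonempty_iff_ne_empty.2 (ne_of_mem_erase hs)
  exact ⟨i, by simpa [piecewise_eq_of_mem _ _ _ hi] using h i⟩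

section Tensor

variable {F ι : Type*} [Field F] [Fintype ι] {X : ι → Type*}

variable (F X) in
def pureTensor : MultilinearMap F (fun i => X i → F) ((∀ i, X i) → F) :=
  MultilinearMap.pi fun j =>
    (MultilinearMap.mkPiAlgebra F ι F).compLinearMap fun i => LinearMap.proj (j i)

@[simp]
theorem pureTensor_apply (x : ∀ i, X i → F) (j : ∀ i, X i) : pureTensor F X x j = ∏ i, x i (j i) :=
  rfl

theorem pureTensor_single [∀ i, DecidableEq (X i)] (j : ∀ i, X i) :
    pureTensor F X (fun i => Pi.single (j i) 1) = Pi.single j 1 := by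
  ext j'
  simp [Pi.single_apply, prod_boole, funext_iff]

variable [DecidableEq ι] [∀ i, Fintype (X i)] [∀ i, DecidableEq (X i)]

def tensorSpan (P : ∀ i, Submodule F (X i → F)) : Submodule F ((∀ i, X i) → F) :=
  Submodule.span F (pureTensor F X '' {x | ∃ i, x i ∈ P i})

def piTensorMap (π : ∀ i, Module.End F (X i → F)) : Module.End F ((∀ i, X i) → F) :=
  Matrix.toLin' (.of fun a b => ∏ i, LinearMap.toMatrix' (π i) (a i) (b i))

theorem piTensorMap_pureTensor (π : ∀ i, Module.End F (X i → F)) (x : ∀ i, X i → F) :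
    piTensorMap π (pureTensor F X x) = pureTensor F X fun i => π i (x i) := by
  ext a
  rw [piTensorMap, Matrix.toLin'_apply]
  simp only [pureTensor_apply, ← LinearMap.toMatrix'_mulVec (π _), Matrix.mulVec, dotProduct,
    Matrix.of_apply, Fintype.prod_sum, prod_mul_distrib]

theorem finrank_range_le_of_sup_eq_top {M : Type*} [AddCommGroup M] [Module F M]
    [FiniteDimensional F M] {N Z : Submodule F M} (hNZ : N ⊔ Z = ⊤) {Ψ : Module.End F M}
    (hZ : Z ≤ LinearMap.ker Ψ) : finrank F (LinearMap.range Ψ) ≤ finrank F N := by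
  have : LinearMap.range Ψ = N.map Ψ := by
    rw [LinearMap.range_eq_map, ← hNZ, Submodule.map_sup, LinearMap.le_ker_iff_map.1 hZ, sup_bot_eq]
  rw [this]
  exact Submodule.finrank_map_le Ψ N

theorem prod_card_le_finrank_of_sup_tensorSpan_eq_top {P : ∀ i, Submodule F (X i → F)}
    {N : Submodule F ((∀ i, X i) → F)} (hN : N ⊔ tensorSpan P = ⊤)
    (π : ∀ i, Module.End F (X i → F)) (hP : ∀ i, P i ≤ LinearMap.ker (π i))
    (D : ∀ i, Finset (X i)) (hD : ∀ i, ∀ y ∈ D i, π i (Pi.single y 1) = Pi.single y 1) :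
    ∏ i, #(D i) ≤ finrank F N := by
  have hZ : tensorSpan P ≤ LinearMap.ker (piTensorMap π) := by
    refine Submodule.span_le.2 ?_
    rintro _ ⟨x, ⟨i, hi⟩, rfl⟩
    simpa [piTensorMap_pureTensor] using
      (pureTensor F X).map_coord_zero i (LinearMap.mem_ker.1 (hP i hi))
  have hfix : ∀ j ∈ Fintype.piFinset D, piTensorMap π (Pi.single j 1) = Pi.single j 1 := by
    intro j hj
    rw [← pureTensor_single, piTensorMap_pureTensor]
    congr 1
    exact funext fun i => hD i _ (Fintype.mem_piFinset.1 hj i)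
  let single (j : Fintype.piFinset D) : (∀ i, X i) → F := Pi.single j.1 1
  have hli : LinearIndependent F single := by
    convert (Pi.basisFun F (∀ i, X i)).linearIndependent.comp _ Subtype.val_injective using 1
    ext j : 1
    simp [single]
  calc ∏ i, #(D i) = finrank F (Submodule.span F (Set.range single)) := by
        rw [finrank_span_eq_card hli, Fintype.card_coe, Fintype.card_piFinset]
    _ ≤ finrank F (LinearMap.range (piTensorMap π)) := by
        refine Submodule.finrank_mono (Submodule.span_le.2 ?_)
        rintro _ ⟨j, rfl⟩
        exact ⟨_, hfix j j.2⟩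
    _ ≤ finrank F N := finrank_range_le_of_sup_eq_top hN hZ

end Tensor

section Interpolation

open Polynomial

variable {F α : Type*} [Field F] {e : α → F} {n : ℕ}

def polyEval (e : α → F) : F[X] →ₗ[F] α → F :=
  LinearMap.pi fun a => leval (e a)

@[simp]
theorem polyEval_apply (p : F[X]) (a : α) : polyEval e p a = p.eval (e a) :=
  rfl

def polySpace (e : α → F) (n : ℕ) : Submodule F (α → F) :=
  (degreeLT F n).map (polyEval e)

def InterpolatesOn (P : Submodule F (α → F)) (S : Finset α) : Prop :=
  ∀ g : α → F, ∃ p ∈ P, ∀ a ∈ S, p a = g a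

variable [DecidableEq α]

theorem polySpace_interpolatesOn (he : Function.Injective e) {S : Finset α} (hS : #S ≤ n) :
    InterpolatesOn (polySpace e n) S := fun g => by
  refine ⟨polyEval e (Lagrange.interpolate S e g), ⟨_, ?_, rfl⟩, fun a ha => ?_⟩
  · exact mem_degreeLT.2 <|
      (Lagrange.degree_interpolate_lt g he.injOn).trans_le (by exact_mod_cast hS)
  · exact Lagrange.eval_interpolate_at_node g he.injOn ha

def interpolationResidual (S : Finset α) (e : α → F) : Module.End F (α → F) :=
  LinearMap.id - polyEval e ∘ₗ Lagrange.interpolate S e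

theorem polySpace_le_ker_interpolationResidual (he : Function.Injective e) {S : Finset α}
    (hS : #S = n) : polySpace e n ≤ LinearMap.ker (interpolationResidual S e) := by
  rintro _ ⟨p, hp, rfl⟩
  rw [← hS, SetLike.mem_coe, mem_degreeLT] at hp
  have : Lagrange.interpolate S e (polyEval e p) = p := (Lagrange.eq_interpolate he.injOn hp).symm
  simp [interpolationResidual, this]

theorem interpolationResidual_single {S : Finset α} {a : α} (ha : a ∉ S) :
    interpolationResidual S e (Pi.single a 1) = Pi.single a 1 := by
  have : Lagrange.interpolate S e (Pi.single a 1) = 0 := by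
    rw [← map_zero (Lagrange.interpolate S e)]
    exact Lagrange.interpolate_eq_of_values_eq_on _ _ fun b hb =>
      Pi.single_eq_of_ne (ne_of_mem_of_not_mem hb ha) 1
  simp [interpolationResidual, this]

end Interpolation

section Colorful

variable {V ι : Type*} [DecidableEq V] [Fintype ι]

abbrev Transversal (color : V → ι) : Type _ := ∀ i, {v : V // color v = i}

variable {color : V → ι}

def Transversal.toFinset (j : Transversal color) : Finset V :=
  univ.image fun i => (j i : V)

theorem Transversal.mem_toFinset {j : Transversal color} {v : V} :
    v ∈ j.toFinset ↔ (j (color v) : V) = v := by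
  simp only [toFinset, mem_image, mem_univ, true_and]
  constructor
  · rintro ⟨i, rfl⟩
    exact congrArg (fun k => (j k : V)) (j i).2
  · exact fun h => ⟨_, h⟩

theorem Transversal.coe_mem_toFinset (j : Transversal color) (i : ι) : (j i : V) ∈ j.toFinset :=
  mem_image_of_mem _ (mem_univ i)

variable [DecidableEq ι]

theorem Transversal.exists_toFinset_eq {A : Finset V} (hA : ∀ i, #(A.filter (color · = i)) = 1) :
    ∃ j : Transversal color, j.toFinset = A := by
  choose a ha using fun i => card_eq_one.1 (hA i)
  have hmem : ∀ v i, a i = v ↔ v ∈ A ∧ color v = i := fun v i => by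
    rw [eq_comm, ← mem_singleton, ← ha i, mem_filter]
  refine ⟨fun i => ⟨a i, ((hmem _ i).1 rfl).2⟩, ?_⟩
  ext v
  rw [Transversal.mem_toFinset]
  simpa using hmem v (color v)

variable [Fintype V]

theorem card_colorful_le_card_transversal (K : Finset (Finset V)) :
    #(K.filter fun A => ∀ i, #(A.filter (color · = i)) = 1) ≤
      #(univ.filter fun j : Transversal color => j.toFinset ∈ K) := by
  refine card_le_card_of_surjOn Transversal.toFinset fun A hA => ?_
  obtain ⟨hAK, hA⟩ := mem_filter.1 hA
  obtain ⟨j, rfl⟩ := Transversal.exists_toFinset_eq hA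
  exact ⟨j, by simpa using hAK, rfl⟩

def nonfaceSpan (F : Type*) [Field F] (color : V → ι) (B : Finset (Finset V)) :
    Submodule F (Transversal color → F) :=
  Submodule.span F
    (Set.range fun j : {j : Transversal color // j.toFinset ∉ B} => Pi.single j.1 1)

variable {F : Type*} [Field F]

theorem mem_nonfaceSpan_of_forall_ne_zero {B : Finset (Finset V)} {w : Transversal color → F}
    (h : ∀ j, w j ≠ 0 → j.toFinset ∉ B) : w ∈ nonfaceSpan F color B := by
  rw [← univ_sum_single w]
  refine Submodule.sum_mem _ fun j _ => ?_
  by_cases hw : w j = 0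
  · simp [hw]
  · rw [← mul_one (w j), ← smul_eq_mul, Pi.single_smul']
    exact Submodule.smul_mem _ _ (Submodule.subset_span ⟨⟨j, h j hw⟩, rfl⟩)

variable {B : Finset (Finset V)} {L M : Finset V} {P : ∀ i, Submodule F ({v // color v = i} → F)}

theorem single_mem_nonfaceSpan_sup_tensorSpan (hL : #L < Fintype.card ι)
    (hmax : ∀ A ∈ B, L ⊆ A → A ⊆ M)
    (hP : ∀ i, InterpolatesOn (P i) (M.subtype (color · = i)))
    {j : Transversal color} (hLj : L ⊆ j.toFinset) :
    Pi.single j 1 ∈ nonfaceSpan F color B ⊔ tensorSpan P := by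
  choose u huP hu using fun i => hP i (Pi.single (j i) 1)
  let b i : {v // color v = i} → F :=
    if i ∈ L.image color then Pi.single (j i) 1 else Pi.single (j i) 1 - u i
  have hdiff : ∀ i, Pi.single (j i) 1 - b i ∈ P i := fun i => by
    by_cases hi : i ∈ L.image color
    · simp only [b, if_pos hi, sub_self, zero_mem]
    · simpa only [b, if_neg hi, sub_sub_cancel] using huP i
  have hb : pureTensor F _ b ∈ nonfaceSpan F color B := by
    refine mem_nonfaceSpan_of_forall_ne_zero fun j' hj' hB => ?_
    have hb' : ∀ i, b i (j' i) ≠ 0 := by simpa [prod_ne_zero_iff] using hj'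
    have hLj' : L ⊆ j'.toFinset := fun w hw => by
      have hj'w : j' (color w) = j (color w) := by
        have hbw : b (color w) = Pi.single (j (color w)) 1 := if_pos (mem_image_of_mem color hw)
        simpa [hbw, Pi.single_apply] using hb' (color w)
      rw [Transversal.mem_toFinset, hj'w, ← Transversal.mem_toFinset]
      exact hLj hw
    obtain ⟨i, hi⟩ : ∃ i, i ∉ L.image color := by
      by_contra! h
      have := card_le_card fun i (_ : i ∈ univ) => h i
      rw [card_univ] at this
      exact (this.trans card_image_le).not_gt hL
    have hj'M : (j' i : V) ∉ M := fun hM => hb' i <| by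
      simp only [b, if_neg hi, Pi.sub_apply, hu i _ (mem_subtype.2 hM), sub_self]
    exact hj'M (hmax _ hB hLj' (j'.coe_mem_toFinset i))
  have hsub := (pureTensor F _).sub_mem_span_image_of_sub_mem hdiff
  rw [pureTensor_single] at hsub
  have := Submodule.add_mem_sup hb hsub
  rwa [add_sub_cancel] at this

theorem nonfaceSpan_filter_le (hL : #L < Fintype.card ι) (hmax : ∀ A ∈ B, L ⊆ A → A ⊆ M)
    (hP : ∀ i, InterpolatesOn (P i) (M.subtype (color · = i))) :
    nonfaceSpan F color (B.filter fun A => ¬L ⊆ A) ≤ nonfaceSpan F color B ⊔ tensorSpan P := by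
  refine Submodule.span_le.2 ?_
  rintro _ ⟨⟨j, hj⟩, rfl⟩
  by_cases hjB : j.toFinset ∈ B
  · exact single_mem_nonfaceSpan_sup_tensorSpan hL hmax hP (by simpa [hjB] using hj)
  · exact Submodule.mem_sup_left (Submodule.subset_span ⟨⟨j, hjB⟩, rfl⟩)

theorem nonfaceSpan_sup_tensorSpan_eq_top {d : ℕ} (hd : d < Fintype.card ι)
    {K : Finset (Finset V)} (hcoll : Collapsible d K)
    (hP : ∀ M ∈ K, ∀ i, InterpolatesOn (P i) (M.subtype (color · = i))) :
    nonfaceSpan F color K ⊔ tensorSpan P = ⊤ := by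
  induction hcoll using Relation.ReflTransGen.head_induction_on with
  | refl =>
    exact eq_top_iff.2 fun w _ =>
      Submodule.mem_sup_left (mem_nonfaceSpan_of_forall_ne_zero fun _ _ => notMem_empty _)
  | head hstep _ ih =>
    obtain ⟨L, M, -, hM, hL, hmax, rfl⟩ := hstep
    refine top_unique ((ih fun M' hM' => hP M' (filter_subset _ _ hM')).ge.trans ?_)
    exact sup_le (nonfaceSpan_filter_le (hL.trans_lt hd) hmax (hP M hM)) le_sup_right

end Colorful

theorem exists_le_mul_of_prod_le_pow_mul_prod {ι : Type*} [Fintype ι] [Nonempty ι]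
    {a b : ι → ℝ} {c : ℝ} (hb : ∀ i, 0 < b i) (hc : 0 ≤ c)
    (h : ∏ i, a i ≤ c ^ Fintype.card ι * ∏ i, b i) : ∃ i, a i ≤ c * b i := by
  by_contra! hlt
  rcases hc.eq_or_lt with rfl | hc
  · rw [zero_pow Fintype.card_ne_zero, zero_mul] at h
    exact h.not_gt (prod_pos fun i _ => by simpa using hlt i)
  · rw [← card_univ, ← prod_const, ← prod_mul_distrib] at h
    exact (prod_lt_prod_of_nonempty (fun i _ => mul_pos hc (hb i)) (fun i _ => hlt i)
      univ_nonempty).not_ge h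

section Counting

variable {V ι : Type*} [Fintype V] [DecidableEq V] [DecidableEq ι] {color : V → ι}
  {K : Finset (Finset V)}

variable (color) in
def maxMonochromaticCard (K : Finset (Finset V)) (i : ι) : ℕ :=
  (K.filter fun A => ∀ v ∈ A, color v = i).sup card

theorem card_le_maxMonochromaticCard {A : Finset V} {i : ι} (hA : A ∈ K)
    (hAi : ∀ v ∈ A, color v = i) : #A ≤ maxMonochromaticCard color K i :=
  le_sup (f := card) (mem_filter.2 ⟨hA, hAi⟩)

theorem maxMonochromaticCard_le (i : ι) :
    maxMonochromaticCard color K i ≤ #(univ.filter (color · = i)) :=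
  Finset.sup_le fun _ hA => card_le_card fun v hv => by simp [(mem_filter.1 hA).2 v hv]

theorem exists_card_eq_maxMonochromaticCard (hK : IsComplex K) (hne : K.Nonempty) (i : ι) :
    ∃ A ∈ K, (∀ v ∈ A, color v = i) ∧ #A = maxMonochromaticCard color K i := by
  obtain ⟨B, hB⟩ := hne
  have : (K.filter fun A => ∀ v ∈ A, color v = i).Nonempty :=
    ⟨∅, mem_filter.2 ⟨hK B hB ∅ (empty_subset B), by simp⟩⟩
  obtain ⟨A, hA, hAcard⟩ := exists_mem_eq_sup _ this card
  exact ⟨A, (mem_filter.1 hA).1, (mem_filter.1 hA).2, hAcard.symm⟩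

variable [Fintype ι]

theorem prod_sub_maxMonochromaticCard_le_card_nonface (hK : IsComplex K) {d : ℕ}
    (hd : d < Fintype.card ι) (hcoll : Collapsible d K) :
    ∏ i, (#(univ.filter (color · = i)) - maxMonochromaticCard color K i) ≤
      #(univ.filter fun j : Transversal color => j.toFinset ∉ K) := by
  let emb : V ↪ ℚ :=
    (Fintype.equivFin V).toEmbedding.trans (Fin.valEmbedding.trans Nat.castEmbedding)
  let e i : {v // color v = i} → ℚ := fun y => emb y
  have he i : Function.Injective (e i) := emb.injective.comp Subtype.val_injective
  have hP : ∀ M ∈ K, ∀ i, InterpolatesOn (polySpace (e i) (maxMonochromaticCard color K i))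
      (M.subtype (color · = i)) := fun M hM i => by
    refine polySpace_interpolatesOn (he i) ?_
    rw [card_subtype]
    exact card_le_maxMonochromaticCard (hK M hM _ (filter_subset _ _))
      fun v hv => (mem_filter.1 hv).2
  choose C hC using fun i => exists_subset_card_eq (s := (univ : Finset {v // color v = i}))
    (n := maxMonochromaticCard color K i)
    (by rw [card_univ, Fintype.card_subtype]; exact maxMonochromaticCard_le i)
  calc ∏ i, (#(univ.filter (color · = i)) - maxMonochromaticCard color K i)
      = ∏ i, #(C i)ᶜ := by simp [card_compl, hC, Fintype.card_subtype]
    _ ≤ finrank ℚ (nonfaceSpan ℚ color K) :=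
      prod_card_le_finrank_of_sup_tensorSpan_eq_top (nonfaceSpan_sup_tensorSpan_eq_top hd hcoll hP)
        (fun i => interpolationResidual (C i) (e i))
        (fun i => polySpace_le_ker_interpolationResidual (he i) (hC i).2) (fun i => (C i)ᶜ)
        fun i _ hy => interpolationResidual_single (mem_compl.1 hy)
    _ ≤ #(univ.filter fun j : Transversal color => j.toFinset ∉ K) := by
      refine (finrank_range_le_card _).trans_eq ?_
      rw [Fintype.card_subtype]

theorem prod_sub_maxMonochromaticCard_le (hK : IsComplex K) {d : ℕ} (hd : d < Fintype.card ι)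
    (hcoll : Collapsible d K) :
    ∏ i, ((#(univ.filter (color · = i)) : ℝ) - maxMonochromaticCard color K i) ≤
      ∏ i, (#(univ.filter (color · = i)) : ℝ) -
        #(K.filter fun A => ∀ i, #(A.filter (color · = i)) = 1) := by
  have hnonface := prod_sub_maxMonochromaticCard_le_card_nonface (color := color) hK hd hcoll
  have hcolorful := card_colorful_le_card_transversal (color := color) K
  have htotal := card_filter_add_card_filter_not (s := univ) fun j : Transversal color =>
    j.toFinset ∈ K
  simp only [card_univ, Fintype.card_pi, Fintype.card_subtype] at htotal
  rw [← prod_congr rfl fun i _ => Nat.cast_sub (maxMonochromaticCard_le i), ← Nat.cast_prod,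
    ← Nat.cast_prod, ← htotal, Nat.cast_add]
  have h1 : (_ : ℝ) ≤ _ := Nat.cast_le.2 hnonface
  have h2 : (_ : ℝ) ≤ _ := Nat.cast_le.2 hcolorful
  linarith

end Counting

end

theorem optimal_colorful_fractional_helly_collapsible_general
    (d : ℕ) {V : Type} [Fintype V] [DecidableEq V]
    (K : Finset (Finset V)) (hK : IsComplex K) (hcoll : Collapsible d K)
    (color : V → Fin (d + 1))
    (hne : ∀ i, 1 ≤ (Finset.univ.filter fun v => color v = i).card)
    (α : ℝ) (hα0 : 0 < α) (hα1 : α ≤ 1)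
    (hcount : α * ∏ i, ((Finset.univ.filter fun v => color v = i).card : ℝ) ≤
      ((K.filter fun A => ∀ i, (A.filter fun v => color v = i).card = 1).card : ℝ)) :
    ∃ i : Fin (d + 1), ∃ A ∈ K, (∀ v ∈ A, color v = i) ∧
      (1 - (1 - α) ^ (1 / ((d : ℝ) + 1))) *
          ((Finset.univ.filter fun v => color v = i).card : ℝ) - 1
        ≤ (A.card : ℝ) - 1 := by
  have hn i : (0 : ℝ) < #(univ.filter (color · = i)) := by exact_mod_cast hne i
  have hKne : K.Nonempty := by
    have hpos := (mul_pos hα0 (prod_pos fun i _ => hn i)).trans_le hcount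
    exact (card_pos.1 (by exact_mod_cast hpos)).mono (filter_subset _ _)
  have hβ : ((1 - α) ^ (1 / ((d : ℝ) + 1))) ^ Fintype.card (Fin (d + 1)) = 1 - α := by
    rw [Fintype.card_fin, one_div, ← Nat.cast_succ,
      Real.rpow_inv_natCast_pow (by linarith) d.succ_ne_zero]
  have hprod : ∏ i, ((#(univ.filter (color · = i)) : ℝ) - maxMonochromaticCard color K i) ≤
      ∏ i, (#(univ.filter (color · = i)) : ℝ) -
        #(K.filter fun A => ∀ i, #(A.filter (color · = i)) = 1) := by
    -- only the `Decidable` instances of `∀ i : Fin (d + 1), _` differ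
    convert prod_sub_maxMonochromaticCard_le (color := color) hK (by simp) hcoll
  obtain ⟨i, hi⟩ := exists_le_mul_of_prod_le_pow_mul_prod
    (a := fun i => #(univ.filter (color · = i)) - (maxMonochromaticCard color K i : ℝ)) hn
    (Real.rpow_nonneg (sub_nonneg.2 hα1) _) (by rw [hβ, sub_mul, one_mul]; linarith)
  obtain ⟨A, hA, hAi, hAcard⟩ := exists_card_eq_maxMonochromaticCard hK hKne i
  exact ⟨i, A, hA, hAi, by rw [hAcard]; linarith⟩

/-- **Theorem 1.7**: the optimal colorful fractional Helly theorem for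
`d`-collapsible complexes. The vertex set of `K` is the fintype `V`, colored by
`color : V → Fin (d+1)` with all color classes nonempty. If at least
`α · n 1 ⋯ n (d+1)` of the colorful `d`-faces are in `K`, then for some `i` the
induced subcomplex `K[N i]` has dimension at least
`(1 - (1-α)^(1/(d+1))) · n i - 1`. -/
theorem optimal_colorful_fractional_helly_collapsible
    (d : ℕ) (hd : 1 ≤ d) {V : Type} [Fintype V] [DecidableEq V]
    (K : Finset (Finset V)) (hK : IsComplex K) (hcoll : Collapsible d K)
    (color : V → Fin (d + 1))
    (hne : ∀ i, 1 ≤ (Finset.univ.filter fun v => color v = i).card)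
    (α : ℝ) (hα0 : 0 < α) (hα1 : α ≤ 1)
    (hcount : α * ∏ i, ((Finset.univ.filter fun v => color v = i).card : ℝ) ≤
      ((K.filter fun A => ∀ i, (A.filter fun v => color v = i).card = 1).card : ℝ)) :
    ∃ i : Fin (d + 1), ∃ A ∈ K, (∀ v ∈ A, color v = i) ∧
      (1 - (1 - α) ^ (1 / ((d : ℝ) + 1))) *
          ((Finset.univ.filter fun v => color v = i).card : ℝ) - 1
        ≤ (A.card : ℝ) - 1 :=
  optimal_colorful_fractional_helly_collapsible_general d K hK hcoll color hne α hα0 hα1 hcount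
end

section
/- (Proposition 1.9, Kim's refined conjecture for d-collapsible complexes.) Let d ≥ 1, let n_i be positive and r_i non-negative integers for i ∈ {1,…,d+1} with n_i ≥ r_i + 1. Let K be a d-collapsible simplicial complex whose vertex set N is partitioned into d+1 disjoint subsets N = N_1 ⊔ ⋯ ⊔ N_{d+1} with |N_i| = n_i and dim K[N_i] ≤ r_i − 1 for every i. Then K contains at most n_1⋯n_{d+1} − (n_1 − r_1)⋯(n_{d+1} − r_{d+1}) colorful d-faces. -/
/-!
Colour the grid `N₁ × ⋯ × N_{d+1}` of colourful tuples and label each colour class injectively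
in `ℚ`. The functions on the grid that are polynomial of degree `< n_i - r_i` in the `i`-th
coordinate, for every `i`, form a space of dimension at least `∏ (n_i - r_i)` (products of
Lagrange polynomials). Such a function vanishing outside the tuples spanning faces of a
`d`-collapsible `K` is zero: collapsing a face `L` with `|L| ≤ d` leaves a colour `j` free, and
along the `j`-th coordinate the function vanishes outside the unique maximal face `M ⊇ L`, which
misses at least `n_j - r_j` vertices of colour `j`. Hence these functions are determined by their
values on the tuples not spanning a face, of which there are at most `∏ n_i` minus the number of
colourful faces.
-/

open scoped BigOperators

open Finset Polynomial Module

section PolyFunctions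

variable {F X : Type*} [Field F]

noncomputable def polyFunctions (ζ : X → F) (m : ℕ) : Submodule F (X → F) :=
  (degreeLT F m).map (LinearMap.pi fun w => leval (ζ w))

theorem eq_zero_of_mem_polyFunctions {ζ : X → F} (hζ : Function.Injective ζ) {m : ℕ}
    {f : X → F} (hf : f ∈ polyFunctions ζ m) (T : Finset X) (hT : m ≤ #T)
    (hfT : ∀ w ∈ T, f w = 0) : f = 0 := by
  classical
  obtain ⟨p, hp, rfl⟩ := hf
  have hp0 : p = 0 := by
    refine eq_zero_of_degree_lt_of_eval_finset_eq_zero (T.image ζ) ?_ ?_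
    · rw [card_image_of_injective T hζ]
      exact (mem_degreeLT.mp hp).trans_le (by exact_mod_cast hT)
    · simpa using hfT
  simp [hp0]

theorem exists_mem_polyFunctions_comp_eq_single {ζ : X → F} (hζ : Function.Injective ζ) {m : ℕ}
    {p : Fin m → X} (hp : Function.Injective p) :
    ∃ g : Fin m → X → F, (∀ a, g a ∈ polyFunctions ζ m) ∧ ∀ a, g a ∘ p = Pi.single a 1 := by
  classical
  have hinj : Set.InjOn (ζ ∘ p) (univ : Finset (Fin m)) := (hζ.comp hp).injOn
  refine ⟨fun a w => (Lagrange.basis univ (ζ ∘ p) a).eval (ζ w), fun a => ?_, fun a => ?_⟩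
  · refine ⟨Lagrange.basis univ (ζ ∘ p) a, mem_degreeLT.mpr ?_, rfl⟩
    rw [Lagrange.degree_basis hinj (mem_univ a), card_univ, Fintype.card_fin]
    exact_mod_cast Nat.sub_lt (Fin.pos a) one_pos
  · funext b
    rw [Pi.single_apply]
    split_ifs with hba
    · subst hba
      exact Lagrange.eval_basis_self (v := ζ ∘ p) hinj (mem_univ b)
    · exact Lagrange.eval_basis_of_ne (v := ζ ∘ p) (Ne.symm hba) (mem_univ b)

end PolyFunctions

theorem Submodule.finrank_le_card_of_forall_eq_zero {F α : Type*} [Field F] [Fintype α]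
    (W : Submodule F (α → F)) (T : Finset α) (hW : ∀ G ∈ W, (∀ x ∈ T, G x = 0) → G = 0) :
    finrank F W ≤ #T := by
  let restrict : W →ₗ[F] T → F := (LinearMap.funLeft F F Subtype.val).comp W.subtype
  have hinj : Function.Injective restrict := by
    refine (injective_iff_map_eq_zero restrict).mpr fun G hG => Subtype.ext ?_
    exact hW G G.2 fun x hx => congrFun hG ⟨x, hx⟩
  simpa using LinearMap.finrank_le_finrank_of_injective hinj

section GridPolyFunctions

variable {F ι : Type*} [Field F] [DecidableEq ι] {X : ι → Type*}

noncomputable def gridPolyFunctions (ζ : ∀ i, X i → F) (m : ι → ℕ) :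
    Submodule F ((∀ i, X i) → F) :=
  ⨅ j, ⨅ x, (polyFunctions (ζ j) (m j)).comap (LinearMap.funLeft F F (Function.update x j))

variable {ζ : ∀ i, X i → F} {m : ι → ℕ}

theorem mem_gridPolyFunctions {G : (∀ i, X i) → F} :
    G ∈ gridPolyFunctions ζ m ↔
      ∀ j x, (fun w => G (Function.update x j w)) ∈ polyFunctions (ζ j) (m j) := by
  simp only [gridPolyFunctions, Submodule.mem_iInf, Submodule.mem_comap]
  rfl

theorem apply_eq_zero_of_mem_gridPolyFunctions (hζ : ∀ i, Function.Injective (ζ i))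
    {G : (∀ i, X i) → F} (hG : G ∈ gridPolyFunctions ζ m) {j : ι} (x : ∀ i, X i)
    (T : Finset (X j)) (hT : m j ≤ #T) (hGT : ∀ w ∈ T, G (Function.update x j w) = 0) :
    G x = 0 := by
  have h := eq_zero_of_mem_polyFunctions (hζ j) (mem_gridPolyFunctions.mp hG j x) T hT hGT
  simpa using congrFun h (x j)

theorem prod_mem_gridPolyFunctions [Fintype ι] {g : ∀ i, X i → F}
    (hg : ∀ i, g i ∈ polyFunctions (ζ i) (m i)) :
    (fun x => ∏ i, g i (x i)) ∈ gridPolyFunctions ζ m := by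
  refine mem_gridPolyFunctions.mpr fun j x => ?_
  have hslice : (fun w => ∏ i, g i (Function.update x j w i)) =
      (∏ i ∈ univ.erase j, g i (x i)) • g j := by
    funext w
    rw [← mul_prod_erase univ _ (mem_univ j), Pi.smul_apply, smul_eq_mul, mul_comm,
      Function.update_self]
    congr 1
    refine prod_congr rfl fun i hi => ?_
    rw [Function.update_of_ne (ne_of_mem_erase hi)]
  rw [hslice]
  exact Submodule.smul_mem _ _ (hg j)

theorem prod_le_finrank_gridPolyFunctions [Fintype ι] [∀ i, Fintype (X i)]
    (hζ : ∀ i, Function.Injective (ζ i)) (hm : ∀ i, m i ≤ Fintype.card (X i)) :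
    ∏ i, m i ≤ finrank F (gridPolyFunctions ζ m) := by
  have p : ∀ i, Fin (m i) ↪ X i := fun i =>
    (Function.Embedding.nonempty_of_card_le (by simpa using hm i)).some
  choose g hg hdual using fun i => exists_mem_polyFunctions_comp_eq_single (hζ i) (p i).injective
  let e : (∀ i, Fin (m i)) → (∀ i, X i) → F := fun b x => ∏ i, g i (b i) (x i)
  have he : ∀ b, e b ∈ gridPolyFunctions ζ m := fun b =>
    prod_mem_gridPolyFunctions fun i => hg i (b i)
  -- evaluated on the pivot grid, the `e b` are the standard basis vectors
  have hlin : LinearIndependent F e := by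
    refine LinearIndependent.of_comp
      (LinearMap.funLeft F F fun (b : ∀ i, Fin (m i)) i => p i (b i)) ?_
    convert (Pi.basisFun F (∀ i, Fin (m i))).linearIndependent
    funext b b'
    have hpivot : ∀ i, g i (b i) (p i (b' i)) =
        (Pi.single (b i) 1 : Fin (m i) → F) (b' i) := fun i =>
      congrFun (hdual i (b i)) (b' i)
    simp only [Function.comp_apply, LinearMap.funLeft_apply, e, hpivot, Pi.basisFun_apply,
      Pi.single_apply, prod_boole, funext_iff, mem_univ, true_implies]
  calc ∏ i, m i = finrank F (Submodule.span F (Set.range e)) := by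
        simp [finrank_span_eq_card hlin]
    _ ≤ finrank F (gridPolyFunctions ζ m) :=
        Submodule.finrank_mono (Submodule.span_le.mpr (Set.range_subset_iff.mpr he))

end GridPolyFunctions

section ColorfulFaces

variable {V ι : Type*} [Fintype ι] [DecidableEq ι] {color : V → ι}

theorem exists_color_forall_ne {L : Finset V} (hL : #L < Fintype.card ι) :
    ∃ j, ∀ v ∈ L, color v ≠ j := by
  obtain ⟨j, -, hj⟩ := exists_mem_notMem_of_card_lt_card (s := L.image color) (t := univ)
    (card_image_le.trans_lt (by simpa using hL))
  exact ⟨j, fun v hv hvj => hj (mem_image.mpr ⟨v, hv, hvj⟩)⟩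

variable [DecidableEq V]

def gridFace (x : ∀ i, {v // color v = i}) : Finset V :=
  univ.image fun i => (x i : V)

theorem val_mem_gridFace_update (x : ∀ i, {v // color v = i}) (j : ι) (w : {v // color v = j}) :
    (w : V) ∈ gridFace (Function.update x j w) :=
  mem_image.mpr ⟨j, mem_univ j, by rw [Function.update_self]⟩

theorem subset_gridFace_update {x : ∀ i, {v // color v = i}} {L : Finset V}
    (hL : L ⊆ gridFace x) {j : ι} (hj : ∀ v ∈ L, color v ≠ j) (w : {v // color v = j}) :
    L ⊆ gridFace (Function.update x j w) := by
  intro v hv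
  obtain ⟨i, -, rfl⟩ := mem_image.mp (hL hv)
  have hij : i ≠ j := by simpa [(x i).2] using hj _ hv
  exact mem_image.mpr ⟨i, mem_univ i, by rw [Function.update_of_ne hij]⟩

theorem exists_gridFace_eq {A : Finset V} (hA : ∀ i, #{v ∈ A | color v = i} = 1) :
    ∃ x : ∀ i, {v // color v = i}, gridFace x = A := by
  choose t ht using fun i => card_eq_one.mp (hA i)
  have hmem : ∀ i, t i ∈ {v ∈ A | color v = i} := fun i => by simp [ht i]
  refine ⟨fun i => ⟨t i, (mem_filter.mp (hmem i)).2⟩, ext fun v => ?_⟩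
  simp only [gridFace, mem_image, mem_univ, true_and]
  constructor
  · rintro ⟨i, rfl⟩
    exact (mem_filter.mp (hmem i)).1
  · intro hv
    have : v ∈ {u ∈ A | color u = color v} := mem_filter.mpr ⟨hv, rfl⟩
    rw [ht] at this
    exact ⟨color v, (mem_singleton.mp this).symm⟩

end ColorfulFaces

section Collapse

variable {F V ι : Type*} [Field F] [DecidableEq V] [Fintype ι] [DecidableEq ι] {color : V → ι}
  [∀ i, Fintype {v // color v = i}] {ζ : ∀ i, {v // color v = i} → F} {m : ι → ℕ} {d : ℕ}

theorem gridFace_mem_of_elemCollapse (hζ : ∀ i, Function.Injective (ζ i))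
    (hd : d < Fintype.card ι) {K K' : Finset (Finset V)} (hKK' : ElemCollapse d K K')
    (hmiss : ∀ M ∈ K, ∀ j, m j ≤ #{w : {v // color v = j} | (w : V) ∉ M})
    {G : (∀ i, {v // color v = i}) → F} (hG : G ∈ gridPolyFunctions ζ m)
    (hsupp : ∀ x, G x ≠ 0 → gridFace x ∈ K) :
    ∀ x, G x ≠ 0 → gridFace x ∈ K' := by
  obtain ⟨L, M, -, hM, hL, hmax, rfl⟩ := hKK'
  intro x hx
  refine mem_filter.mpr ⟨hsupp x hx, fun hLx => hx ?_⟩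
  obtain ⟨j, hj⟩ := exists_color_forall_ne (hL.trans_lt hd)
  refine apply_eq_zero_of_mem_gridPolyFunctions hζ hG x _ (hmiss M hM j) fun w hw => ?_
  by_contra hw0
  exact (mem_filter.mp hw).2 <|
    hmax _ (hsupp _ hw0) (subset_gridFace_update hLx hj w) (val_mem_gridFace_update x j w)

theorem eq_zero_of_collapsible (hζ : ∀ i, Function.Injective (ζ i))
    (hd : d < Fintype.card ι) {K : Finset (Finset V)} (hK : Collapsible d K)
    (hmiss : ∀ M ∈ K, ∀ j, m j ≤ #{w : {v // color v = j} | (w : V) ∉ M})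
    {G : (∀ i, {v // color v = i}) → F} (hG : G ∈ gridPolyFunctions ζ m)
    (hsupp : ∀ x, G x ≠ 0 → gridFace x ∈ K) : G = 0 := by
  induction hK using Relation.ReflTransGen.head_induction_on with
  | refl => exact funext fun x => by_contra fun hx => notMem_empty _ (hsupp x hx)
  | head hstep _ ih =>
    obtain ⟨L, M, -, -, -, -, rfl⟩ := id hstep
    exact ih (fun M' hM' => hmiss M' (mem_of_mem_filter M' hM'))
      (gridFace_mem_of_elemCollapse hζ hd hstep hmiss hG hsupp)

end Collapse

section Counting

variable {V ι : Type*} [Fintype V] [DecidableEq V] [DecidableEq ι]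

theorem card_sub_le_card_filter_notMem (color : V → ι) (M : Finset V) (j : ι) :
    Fintype.card {v // color v = j} - #{v ∈ M | color v = j} ≤
      #{w : {v // color v = j} | (w : V) ∉ M} := by
  have hsplit := card_filter_add_card_filter_not (s := univ)
    fun w : {v // color v = j} => (w : V) ∈ M
  have hin : #{w : {v // color v = j} | (w : V) ∈ M} ≤ #{v ∈ M | color v = j} :=
    card_le_card_of_injOn Subtype.val (fun w hw => mem_filter.mpr ⟨(mem_filter.mp hw).2, w.2⟩)
      Subtype.val_injective.injOn
  rw [card_univ] at hsplit
  omega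

variable [Fintype ι]

theorem card_colorful_le_card_gridFace_mem (color : V → ι) (K : Finset (Finset V)) :
    #{A ∈ K | ∀ i, #{v ∈ A | color v = i} = 1} ≤
      #{x : ∀ i, {v // color v = i} | gridFace x ∈ K} := by
  calc #{A ∈ K | ∀ i, #{v ∈ A | color v = i} = 1}
      ≤ #(({x : ∀ i, {v // color v = i} | gridFace x ∈ K} : Finset _).image gridFace) := by
        refine card_le_card fun A hA => ?_
        obtain ⟨hAK, hA⟩ := mem_filter.mp hA
        obtain ⟨x, rfl⟩ := exists_gridFace_eq hA
        exact mem_image_of_mem _ (mem_filter.mpr ⟨mem_univ x, hAK⟩)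
    _ ≤ _ := card_image_le

theorem card_colorful_add_prod_le {d : ℕ} (hd : d < Fintype.card ι) {K : Finset (Finset V)}
    (hK : Collapsible d K) (color : V → ι) (m : ι → ℕ)
    (hm : ∀ i, m i ≤ Fintype.card {v // color v = i})
    (hmiss : ∀ M ∈ K, ∀ j, m j ≤ #{w : {v // color v = j} | (w : V) ∉ M}) :
    #{A ∈ K | ∀ i, #{v ∈ A | color v = i} = 1} + ∏ i, m i ≤
      ∏ i, Fintype.card {v // color v = i} := by
  let ζ : ∀ i, {v // color v = i} → ℚ := fun _ w => (Fintype.equivFin V w : ℕ)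
  have hζ : ∀ i, Function.Injective (ζ i) := fun _ =>
    Nat.cast_injective.comp <| Fin.val_injective.comp <|
      (Fintype.equivFin V).injective.comp Subtype.val_injective
  have hfaces : ∏ i, m i ≤ #{x : ∀ i, {v // color v = i} | gridFace x ∉ K} :=
    (prod_le_finrank_gridPolyFunctions hζ hm).trans <|
      Submodule.finrank_le_card_of_forall_eq_zero _ _ fun G hG hG0 =>
        eq_zero_of_collapsible hζ hd hK hmiss hG fun x hx => by
          by_contra hxK
          exact hx (hG0 x (mem_filter.mpr ⟨mem_univ x, hxK⟩))
  have hsplit := card_filter_add_card_filter_not (s := univ)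
    fun x : ∀ i, {v // color v = i} => gridFace x ∈ K
  rw [card_univ, Fintype.card_pi] at hsplit
  have := card_colorful_le_card_gridFace_mem color K
  omega

end Counting

theorem kim_refined_conjecture_collapsible_general
    (d : ℕ) {V : Type} [Fintype V] [DecidableEq V]
    (K : Finset (Finset V)) (hK : IsComplex K) (hcoll : Collapsible d K)
    (color : V → Fin (d + 1)) (n r : Fin (d + 1) → ℕ)
    (hn : ∀ i, (Finset.univ.filter fun v => color v = i).card = n i)
    (hdim : ∀ i, ∀ A ∈ K, (∀ v ∈ A, color v = i) → A.card ≤ r i) :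
    (K.filter fun A => ∀ i, (A.filter fun v => color v = i).card = 1).card ≤
      ∏ i, n i - ∏ i, (n i - r i) := by
  have hclass : ∀ i, Fintype.card {v // color v = i} = n i := fun i => by
    rw [Fintype.card_subtype, hn]
  have hmiss : ∀ M ∈ K, ∀ j, n j - r j ≤ #{w : {v // color v = j} | (w : V) ∉ M} :=
    fun M hM j => by
      have hMj := hdim j _ (hK M hM _ (filter_subset _ M)) fun v hv => (mem_filter.mp hv).2
      have := card_sub_le_card_filter_notMem color M j
      rw [hclass] at this
      omega
  have := card_colorful_add_prod_le (by simp) hcoll color (fun i => n i - r i)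
    (fun i => (hclass i).symm ▸ Nat.sub_le _ _) hmiss
  simp only [hclass] at this
  refine Nat.le_sub_of_add_le ?_
  convert this

/-- **Proposition 1.9 (Kim's refined conjecture for `d`-collapsible complexes)**.
If `K` is `d`-collapsible with color classes of sizes `n i`, `n i ≥ r i + 1`, and the
induced subcomplex on each color class has dimension at most `r i - 1` (i.e. every
face contained in a single color class has at most `r i` vertices), then the number
of colorful `d`-faces of `K` is at most `n 1 ⋯ n (d+1) - (n 1 - r 1) ⋯ (n (d+1) - r (d+1))`. -/
theorem kim_refined_conjecture_collapsible
    (d : ℕ) (hd : 1 ≤ d) {V : Type} [Fintype V] [DecidableEq V]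
    (K : Finset (Finset V)) (hK : IsComplex K) (hcoll : Collapsible d K)
    (color : V → Fin (d + 1)) (n r : Fin (d + 1) → ℕ)
    (hn : ∀ i, (Finset.univ.filter fun v => color v = i).card = n i)
    (hnr : ∀ i, r i + 1 ≤ n i)
    (hdim : ∀ i, ∀ A ∈ K, (∀ v ∈ A, color v = i) → A.card ≤ r i) :
    (K.filter fun A => ∀ i, (A.filter fun v => color v = i).card = 1).card ≤
      ∏ i, n i - ∏ i, (n i - r i) :=
  kim_refined_conjecture_collapsible_general d K hK hcoll color n r hn hdim
end

section
/- (Theorem 1.10, main technical bound.) Let c, d ≥ 1 be integers, let K be a d-collapsible simplicial complex with vertex partition N = N_1 ⊔ ⋯ ⊔ N_c, and let n = (n_1, …, n_c) with n_i = |N_i| ≥ 1. Let r = (r_1, …, r_c) be a vector of positive integers such that dim K[N_i] ≤ r_i − 1 for every i ∈ {1,…,c}, and let k = (k_1, …, k_c) be a vector of non-negative integers with k_i ≤ n_i for all i. Then f_k(K) ≤ p_k(n, d, r), i.e., the number of k-colorful faces of K is at most |{S ∈ binom(N,k) : |S ∩ (N \ R)| ≤ d}| for any choice of subsets R_i ⊆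 N_i with |R_i| = r_i and R = R_1 ⊔ ⋯ ⊔ R_c. -/
open scoped BigOperators

/-!
Work over the field `F` of rational functions in indeterminates `x (a, s)` and give every
vertex `a` the generic row `x_a` supported on the vertices of its own colour. A `k`-colourful
face `A` yields the vector of maximal minors of the rows `x_a, a ∈ A`, read off on the column
sets in `P_k(n, d, r)`; it suffices to show that these vectors are linearly independent.

This is done along the collapsing sequence. When a free face `L ⊆ M` is removed, a removed
colourful face `A₀ ⊇ L` is detected by the maximal minors of a matrix `Y` with rows `y_b`,
`b ∈ A₀`: for `b ∈ L` the row `y_b` is the dual of `x_b` against all rows, and for `b ∉ L` it is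
supported on `R` and dual to `x_b` against the rows of `M` (possible as `|M ∩ N_i| ≤ r_i`).
The minors of `Y` vanish on column sets with more than `|L| ≤ d` elements outside `R`, so by
Cauchy–Binet the pairing with the vector of a face `A` is `det (X_A Yᵀ)`, which is `1` for
`A = A₀` and `0` otherwise.
-/

open Finset Matrix Function

namespace Matrix

section Permutations

variable {𝕜 n : Type*} [CommRing 𝕜] [Fintype n] [DecidableEq n]

theorem exists_perm_forall_ne_zero_of_det_ne_zero {W : Matrix n n 𝕜} (h : W.det ≠ 0) :
    ∃ σ : Equiv.Perm n, ∀ j, W (σ j) j ≠ 0 := by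
  rw [det_apply] at h
  obtain ⟨σ, -, hσ⟩ := exists_ne_zero_of_sum_ne_zero h
  exact ⟨σ, fun j hj => hσ (by
    rw [prod_eq_zero (f := fun i => W (σ i) i) (mem_univ j) hj, smul_zero])⟩

theorem det_eq_zero_of_card_lt {W : Matrix n n 𝕜} (C T : Finset n) (hCT : #T < #C)
    (hW : ∀ j ∈ C, ∀ i ∉ T, W i j = 0) : W.det = 0 := by
  by_contra h
  obtain ⟨σ, hσ⟩ := exists_perm_forall_ne_zero_of_det_ne_zero h
  have hmaps : Set.MapsTo σ C T := fun j hj => by_contra fun hT => hσ j (hW j hj _ hT)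
  exact hCT.not_ge (card_le_card_of_injOn σ hmaps σ.injective.injOn)

theorem card_filter_eq_of_det_ne_zero {γ : Type*} {W : Matrix n n 𝕜} (f g : n → γ)
    (hW : ∀ i j, f i ≠ g j → W i j = 0) (h : W.det ≠ 0) (t : γ) [DecidablePred (f · = t)]
    [DecidablePred (g · = t)] : #{i | f i = t} = #{j | g j = t} := by
  obtain ⟨σ, hσ⟩ := exists_perm_forall_ne_zero_of_det_ne_zero h
  have hfg : ∀ j, f (σ j) = g j := fun j => by_contra fun hne => hσ j (hW _ _ hne)
  exact (card_equiv σ fun j => by simp [hfg]).symm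

end Permutations

end Matrix

theorem Finset.card_filter_orderEmbOfFin {α : Type*} [LinearOrder α] (s : Finset α) {m : ℕ}
    (h : #s = m) (p : α → Prop) [DecidablePred p] :
    #{i | p (s.orderEmbOfFin h i)} = #{a ∈ s | p a} := by
  conv_rhs => rw [← s.map_orderEmbOfFin_univ h, filter_map, card_map]
  rfl

namespace Matrix

section MaxMinors

variable {𝕜 V W : Type*} [CommRing 𝕜] [LinearOrder V] {m : ℕ}

noncomputable def maxMinor (A : Matrix (Fin m) V 𝕜) (S : Finset V) : 𝕜 :=
  if h : #S = m then (A.submatrix id (S.orderEmbOfFin h)).det else 0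

/-- The Cauchy–Binet formula, obtained by expanding in the standard basis of `⋀ᵐ (V → 𝕜)`. -/
theorem det_mul_transpose_eq_sum_maxMinor [Fintype V] [DecidableEq V]
    (A B : Matrix (Fin m) V 𝕜) :
    (A * Bᵀ).det = ∑ S ∈ powersetCard m univ, A.maxMinor S * B.maxMinor S := by
  let b := (Pi.basisFun 𝕜 V).exteriorPower m
  let φ := exteriorPower.pairingDual 𝕜 (V → 𝕜) m
    (exteriorPower.ιMulti 𝕜 m fun j => LinearMap.proj j ∘ₗ B.mulVecLin)
  let x := exteriorPower.ιMulti 𝕜 m fun i => A i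
  have hrepr (s : Set.powersetCard V m) : b.repr x s = A.maxMinor s := by
    simp [b, x, exteriorPower.basis_repr_apply, maxMinor,
      Set.powersetCard.ofFinEmbEquiv_symm_apply, Matrix.submatrix]
  have hbasis (s : Set.powersetCard V m) : φ (b s) = B.maxMinor s := by
    rw [maxMinor, dif_pos (Set.powersetCard.mem_iff.mp s.prop), ← det_transpose]
    simp [b, φ, exteriorPower.basis_apply, exteriorPower.ιMulti_family,
      Set.powersetCard.ofFinEmbEquiv_symm_apply, mulVec, dotProduct, Pi.single_apply]
    rfl
  calc (A * Bᵀ).det = φ x := by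
        simp [φ, x, mulVec, dotProduct, mul_comm]
        rfl
    _ = ∑ s, b.repr x s * φ (b s) := by
        conv_lhs => rw [← b.sum_repr x]
        simp only [map_sum, map_smul, smul_eq_mul]
    _ = ∑ S ∈ powersetCard m univ, A.maxMinor S * B.maxMinor S := by
        simp only [hrepr, hbasis]
        exact (sum_subtype (p := (· ∈ Set.powersetCard V m)) _
          (fun S => by simp [Set.powersetCard.mem_iff]) fun S => A.maxMinor S * B.maxMinor S).symm

noncomputable def rowBlock (X : Matrix V W 𝕜) (A : Finset V) (m : ℕ) : Matrix (Fin m) W 𝕜 :=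
  if h : #A = m then X.submatrix (A.orderEmbOfFin h) id else 0

theorem rowBlock_mul_transpose [Fintype V] (X Y : Matrix V V 𝕜) {A B : Finset V}
    (hA : #A = m) (hB : #B = m) : X.rowBlock A m * (Y.rowBlock B m)ᵀ =
      (X * Yᵀ).submatrix (A.orderEmbOfFin hA) (B.orderEmbOfFin hB) := by
  ext i j
  simp [rowBlock, hA, hB, mul_apply]

theorem maxMinor_rowBlock_eq_zero_of_card_filter_ne {γ : Type*} [DecidableEq γ]
    (color : V → γ) {X : Matrix V V 𝕜} (hX : ∀ a s, color a ≠ color s → X a s = 0)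
    {A S : Finset V} (hA : #A = m) (hS : #S = m) {t : γ}
    (ht : #{v ∈ A | color v = t} ≠ #{v ∈ S | color v = t}) :
    (X.rowBlock A m).maxMinor S = 0 := by
  rw [maxMinor, dif_pos hS, rowBlock, dif_pos hA]
  by_contra h
  refine ht ?_
  rw [← card_filter_orderEmbOfFin A hA (color · = t),
    ← card_filter_orderEmbOfFin S hS (color · = t)]
  exact card_filter_eq_of_det_ne_zero (color ∘ A.orderEmbOfFin hA)
    (color ∘ S.orderEmbOfFin hS) (fun i j hne => hX _ _ hne) h t

theorem maxMinor_rowBlock_eq_zero_of_card_lt_card_sdiff [DecidableEq V] {Y : Matrix V V 𝕜}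
    {L R : Finset V} (hY : ∀ b ∉ L, ∀ s ∉ R, Y b s = 0) {B S : Finset V} (hB : #B = m)
    (hS : #S = m) (h : #L < #(S \ R)) : (Y.rowBlock B m).maxMinor S = 0 := by
  rw [maxMinor, dif_pos hS, rowBlock, dif_pos hB]
  refine det_eq_zero_of_card_lt {j | S.orderEmbOfFin hS j ∉ R} {i | B.orderEmbOfFin hB i ∈ L}
    ?_ fun j hj i hi => hY _ (by simpa using hi) _ (by simpa using hj)
  rw [card_filter_orderEmbOfFin B hB (· ∈ L), card_filter_orderEmbOfFin S hS (· ∉ R),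
    ← sdiff_eq_filter]
  exact (card_le_card fun v hv => (mem_filter.mp hv).2).trans_lt h

theorem det_submatrix_orderEmbOfFin_eq_ite [DecidableEq V] (G : Matrix V V 𝕜) {A B : Finset V}
    (hA : #A = m) (hB : #B = m) (hG : ∀ a ∈ A, ∀ b ∈ B, G a b = if a = b then 1 else 0) :
    (G.submatrix (A.orderEmbOfFin hA) (B.orderEmbOfFin hB)).det = if A = B then 1 else 0 := by
  split_ifs with hAB
  · subst hAB
    convert det_one (R := 𝕜) (n := Fin m)
    ext i j
    simp [hG _ (orderEmbOfFin_mem A hA i) _ (orderEmbOfFin_mem A hB j), one_apply]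
  · obtain ⟨a, haA, haB⟩ : ∃ a ∈ A, a ∉ B := not_subset.mp fun h => hAB
      (eq_of_subset_of_card_le h (hB.trans hA.symm).le)
    obtain ⟨i, rfl⟩ : ∃ i, A.orderEmbOfFin hA i = a := by
      simpa [← Set.mem_range, range_orderEmbOfFin] using haA
    refine det_eq_zero_of_row_eq_zero i fun j => ?_
    have hb := orderEmbOfFin_mem B hB j
    simp [hG _ haA _ hb, show A.orderEmbOfFin hA i ≠ B.orderEmbOfFin hB j from
      fun h => haB (h ▸ hb)]

theorem det_submatrix_orderEmbOfFin_eq_ite_of_subset [DecidableEq V] (G : Matrix V V 𝕜)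
    {L M A B : Finset V} (hGL : ∀ a, ∀ b ∈ L, G a b = if a = b then 1 else 0)
    (hGM : ∀ a ∈ M, ∀ b ∈ M, G a b = if a = b then 1 else 0)
    (hLB : L ⊆ B) (hBM : B ⊆ M) (hAM : L ⊆ A → A ⊆ M) (hA : #A = m) (hB : #B = m) :
    (G.submatrix (A.orderEmbOfFin hA) (B.orderEmbOfFin hB)).det = if A = B then 1 else 0 := by
  by_cases hLA : L ⊆ A
  · exact det_submatrix_orderEmbOfFin_eq_ite G hA hB fun a ha b hb =>
      hGM a (hAM hLA ha) b (hBM hb)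
  obtain ⟨w, hwL, hwA⟩ := not_subset.1 hLA
  rw [if_neg fun h : A = B => hwA (h ▸ hLB hwL)]
  obtain ⟨j, hj⟩ : ∃ j, B.orderEmbOfFin hB j = w := by
    simpa [← Set.mem_range, range_orderEmbOfFin] using hLB hwL
  refine det_eq_zero_of_column_eq_zero j fun i => ?_
  simp only [submatrix_apply, hj, hGL _ w hwL]
  exact if_neg fun h : A.orderEmbOfFin hA i = w => hwA (h ▸ orderEmbOfFin_mem A hA i)

end MaxMinors

end Matrix

theorem LinearIndepOn.of_filter_not_of_dual {ι K W : Type*} [Field K] [AddCommGroup W]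
    [Module K W] {v : ι → W} {s : Finset ι} (p : ι → Prop) [DecidablePred p]
    (hs : LinearIndepOn K v (s.filter (¬p ·) : Set ι))
    (hdual : ∀ i ∈ s, p i → ∃ f : W →ₗ[K] K, f (v i) ≠ 0 ∧ ∀ j ∈ s, j ≠ i → f (v j) = 0) :
    LinearIndepOn K v s := by
  rw [linearIndepOn_finset_iff] at hs ⊢
  intro g hg
  have hp : ∀ i ∈ s, p i → g i = 0 := by
    intro i hi hpi
    obtain ⟨f, hfi, hfj⟩ := hdual i hi hpi
    have := congrArg f hg
    rw [map_sum, sum_eq_single i (fun j hj hji => by rw [map_smul, hfj j hj hji, smul_zero])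
      (absurd hi), map_smul, smul_eq_mul, map_zero] at this
    exact (mul_eq_zero.mp this).resolve_right hfi
  rw [← sum_filter_add_sum_filter_not s p, sum_eq_zero fun j hj => by
    rw [hp j (mem_filter.1 hj).1 (mem_filter.1 hj).2, zero_smul], zero_add] at hg
  intro i hi
  by_cases hpi : p i
  · exact hp i hi hpi
  · exact hs g hg i (mem_filter.2 ⟨hi, hpi⟩)

theorem Finset.exists_embedding_color_preserving {V γ : Type*} [DecidableEq γ] (color : V → γ)
    {M R : Finset V} (h : ∀ t, #{v ∈ M | color v = t} ≤ #{v ∈ R | color v = t}) :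
    ∃ e : M ↪ R, ∀ a, color (e a) = color a := by
  have hfiber (N : Finset V) (t : γ) :
      Fintype.card {a : N // color a = t} = #{v ∈ N | color v = t} := by
    rw [Fintype.card_subtype, ← card_map (Function.Embedding.subtype _)]
    congr 1
    ext
    simp [and_comm]
  have hcard (t : γ) :
      Fintype.card {a : M // color a = t} ≤ Fintype.card {b : R // color b = t} := by
    simpa only [hfiber] using h t
  let emb t := (Function.Embedding.nonempty_of_card_le (hcard t)).some
  exact ⟨((Equiv.sigmaFiberEquiv _).symm.toEmbedding.trans
      (Function.Embedding.sigmaMap (Function.Embedding.refl γ) emb)).trans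
      (Equiv.sigmaFiberEquiv _).toEmbedding, fun a => (emb (color a) ⟨a, rfl⟩).prop⟩

section Generic

abbrev GenericField (V : Type*) := FractionRing (MvPolynomial (V × V) ℚ)

noncomputable def genericMatrix {V γ : Type*} [DecidableEq γ] (color : V → γ) :
    Matrix V V (GenericField V) :=
  of fun a s => if color a = color s then
    algebraMap (MvPolynomial (V × V) ℚ) (GenericField V) (MvPolynomial.X (a, s)) else 0

variable {V γ : Type*} [DecidableEq γ] (color : V → γ)

theorem genericMatrix_apply_of_color_ne {a s : V} (h : color a ≠ color s) :
    genericMatrix color a s = 0 :=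
  if_neg h

theorem isUnit_det_genericMatrix_submatrix {ι : Type*} [Fintype ι] [DecidableEq ι]
    {rows cols : ι → V} (hrows : Injective rows) (hcols : Injective cols)
    (hcolor : ∀ a, color (rows a) = color (cols a)) :
    IsUnit ((genericMatrix color).submatrix rows cols).det := by
  classical
  let P : Matrix ι ι (MvPolynomial (V × V) ℚ) := of fun a b =>
    if color (rows a) = color (cols b) then MvPolynomial.X (rows a, cols b) else 0
  have hP : (genericMatrix color).submatrix rows cols =
      (algebraMap _ (GenericField V)).mapMatrix P := by
    ext a b
    simp only [genericMatrix, P, submatrix_apply, of_apply, RingHom.mapMatrix_apply, map_apply]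
    split_ifs <;> simp
  -- specialize the variables `X (rows a, cols a)` to `1` and all others to `0`
  let pt : V × V → ℚ := fun p => if ∃ a, rows a = p.1 ∧ cols a = p.2 then 1 else 0
  have hpt : (MvPolynomial.eval pt).mapMatrix P = 1 := by
    ext a b
    by_cases hab : a = b
    · subst hab
      simp [P, pt, hcolor, show ∃ c, rows c = rows a ∧ cols c = cols a from ⟨a, rfl, rfl⟩]
    · have : ¬∃ c, rows c = rows a ∧ cols c = cols b := fun ⟨c, hc, hc'⟩ =>
        hab ((hrows hc) ▸ hcols hc')
      simp only [RingHom.mapMatrix_apply, map_apply, P, of_apply, one_apply_ne hab]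
      split_ifs <;> simp [pt, this]
  rw [hP, ← RingHom.map_det, isUnit_iff_ne_zero, ne_eq,
    map_eq_zero_iff _ (IsFractionRing.injective _ _)]
  intro h0
  have := RingHom.map_det (MvPolynomial.eval pt) P
  rw [hpt, det_one, h0, map_zero] at this
  exact zero_ne_one this

theorem exists_dual_rows [Fintype V] [DecidableEq V] {L M R : Finset V}
    (hM : ∀ t, #{v ∈ M | color v = t} ≤ #{v ∈ R | color v = t}) :
    ∃ Y : Matrix V V (GenericField V),
      (∀ a, ∀ b ∈ L, (genericMatrix color * Yᵀ) a b = if a = b then 1 else 0) ∧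
      (∀ a ∈ M, ∀ b ∈ M, (genericMatrix color * Yᵀ) a b = if a = b then 1 else 0) ∧
      ∀ b ∉ L, ∀ s ∉ R, Y b s = 0 := by
  set X := genericMatrix color
  obtain ⟨e, he⟩ := exists_embedding_color_preserving color hM
  let Q := X.submatrix ((↑) : M → V) (fun c => (e c : V))
  have hX : IsUnit X.det := by
    simpa using isUnit_det_genericMatrix_submatrix color injective_id injective_id fun _ => rfl
  have hQ : IsUnit Q.det := isUnit_det_genericMatrix_submatrix color Subtype.val_injective
    (Subtype.val_injective.comp e.injective) fun c => (he c).symm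
  let Y : Matrix V V (GenericField V) := of fun b s =>
    if b ∈ L then X⁻¹ s b
    else if hb : b ∈ M then ∑ c : M, if (e c : V) = s then Q⁻¹ c ⟨b, hb⟩ else 0 else 0
  have hL (a : V) {b : V} (hb : b ∈ L) : (X * Yᵀ) a b = if a = b then 1 else 0 := by
    simp only [mul_apply, transpose_apply, Y, of_apply, if_pos hb]
    rw [← mul_apply, mul_nonsing_inv X hX, one_apply]
  refine ⟨Y, fun a b hb => hL a hb, fun a ha b hb => ?_, fun b hb s hs => ?_⟩
  · by_cases hbL : b ∈ L
    · exact hL a hbL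
    have := congrFun (congrFun (mul_nonsing_inv Q hQ) ⟨a, ha⟩) ⟨b, hb⟩
    simp only [mul_apply, Q, submatrix_apply, one_apply, Subtype.mk.injEq] at this
    simp only [mul_apply, transpose_apply, Y, of_apply, if_neg hbL, dif_pos hb, mul_sum,
      mul_ite, mul_zero]
    rw [sum_comm]
    simpa using this
  · simp only [Y, of_apply, if_neg hb]
    split_ifs
    · exact sum_eq_zero fun c _ => if_neg fun h : (e c : V) = s => hs (h ▸ (e c).prop)
    · rfl

end Generic

section Colorful

variable {V γ : Type*} [DecidableEq γ] (color : V → γ) (k : γ → ℕ)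

abbrev IsColorful (S : Finset V) : Prop :=
  ∀ t, #{v ∈ S | color v = t} = k t

variable {color k}

theorem IsColorful.card_eq [Fintype γ] {S : Finset V} (h : IsColorful color k S) :
    #S = ∑ t, k t := by
  rw [card_eq_sum_card_fiberwise (f := color) (t := univ) fun _ _ => mem_univ _]
  exact sum_congr rfl fun t _ => h t

variable (color k) [Fintype V] [DecidableEq V] [Fintype γ]

def boundedColorfulSets (R : Finset V) (d : ℕ) : Finset (Finset V) :=
  {S | IsColorful color k S ∧ #(S \ R) ≤ d}

variable [LinearOrder V]

noncomputable def minorVector (P : Finset (Finset V)) (A : Finset V) : P → GenericField V :=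
  fun S => ((genericMatrix color).rowBlock A (∑ t, k t)).maxMinor S

variable {color k}

theorem sum_boundedColorfulSets_maxMinor_mul_eq_det {𝕜 : Type*} [CommRing 𝕜]
    {X Y : Matrix V V 𝕜} (hX : ∀ a s, color a ≠ color s → X a s = 0) {L R : Finset V}
    {d : ℕ} (hLd : #L ≤ d) (hY : ∀ b ∉ L, ∀ s ∉ R, Y b s = 0) {A B : Finset V}
    (hA : IsColorful color k A) (hB : #B = ∑ t, k t) :
    ∑ S ∈ boundedColorfulSets color k R d,
        (X.rowBlock A (∑ t, k t)).maxMinor S * (Y.rowBlock B (∑ t, k t)).maxMinor S =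
      (X.rowBlock A (∑ t, k t) * (Y.rowBlock B (∑ t, k t))ᵀ).det := by
  rw [det_mul_transpose_eq_sum_maxMinor]
  refine sum_subset (fun S hS => ?_) fun S hS hSP => ?_
  · simp only [boundedColorfulSets, mem_filter] at hS
    exact mem_powersetCard.2 ⟨subset_univ S, hS.2.1.card_eq⟩
  · have hS := (mem_powersetCard.1 hS).2
    simp only [boundedColorfulSets, mem_filter, mem_univ, true_and, not_and, not_le] at hSP
    by_cases hSc : IsColorful color k S
    · rw [maxMinor_rowBlock_eq_zero_of_card_lt_card_sdiff hY hB hS (hLd.trans_lt (hSP hSc)),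
        mul_zero]
    · obtain ⟨t, ht⟩ := not_forall.1 hSc
      rw [maxMinor_rowBlock_eq_zero_of_card_filter_ne color hX hA.card_eq hS (t := t)
        (by rwa [hA t, ne_comm]), zero_mul]

theorem exists_dual_functional_minorVector {Kc : Finset (Finset V)} {L M R : Finset V}
    {d : ℕ} (hLd : #L ≤ d) (hmax : ∀ A ∈ Kc, L ⊆ A → A ⊆ M)
    (hM : ∀ t, #{v ∈ M | color v = t} ≤ #{v ∈ R | color v = t}) {A₀ : Finset V}
    (hA₀ : A₀ ∈ Kc) (hLA₀ : L ⊆ A₀) (hA₀c : IsColorful color k A₀) :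
    ∃ f : (boundedColorfulSets color k R d → GenericField V) →ₗ[GenericField V] GenericField V,
      f (minorVector color k _ A₀) ≠ 0 ∧
      ∀ A ∈ Kc, IsColorful color k A → A ≠ A₀ → f (minorVector color k _ A) = 0 := by
  obtain ⟨Y, hYL, hYM, hYR⟩ := exists_dual_rows color hM
  set P := boundedColorfulSets color k R d
  let f : (P → GenericField V) →ₗ[GenericField V] GenericField V :=
    ∑ S : P, (Y.rowBlock A₀ (∑ t, k t)).maxMinor S • LinearMap.proj S
  have hf : ∀ A ∈ Kc, IsColorful color k A →
      f (minorVector color k P A) = if A = A₀ then 1 else 0 := by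
    intro A hA hAc
    simp only [f, minorVector, LinearMap.coe_sum, Finset.sum_apply, LinearMap.smul_apply,
      LinearMap.proj_apply, smul_eq_mul]
    rw [sum_coe_sort P fun S => (Y.rowBlock A₀ (∑ t, k t)).maxMinor S *
      ((genericMatrix color).rowBlock A (∑ t, k t)).maxMinor S]
    simp only [mul_comm ((Y.rowBlock A₀ _).maxMinor _)]
    rw [sum_boundedColorfulSets_maxMinor_mul_eq_det (X := genericMatrix color)
        (fun _ _ => genericMatrix_apply_of_color_ne color) hLd hYR hAc hA₀c.card_eq,
      rowBlock_mul_transpose _ _ hAc.card_eq hA₀c.card_eq]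
    exact det_submatrix_orderEmbOfFin_eq_ite_of_subset _ hYL hYM hLA₀ (hmax A₀ hA₀ hLA₀)
      (hmax A hA) _ _
  exact ⟨f, by simp [hf A₀ hA₀ hA₀c], fun A hA hAc hne => by simp [hf A hA hAc, hne]⟩

theorem linearIndepOn_minorVector_of_collapsible {K : Finset (Finset V)} {R : Finset V}
    {d : ℕ} (hK : Collapsible d K)
    (hKR : ∀ M ∈ K, ∀ t, #{v ∈ M | color v = t} ≤ #{v ∈ R | color v = t}) :
    LinearIndepOn (GenericField V) (minorVector color k (boundedColorfulSets color k R d))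
      (K.filter (IsColorful color k) : Set (Finset V)) := by
  induction hK using Relation.ReflTransGen.head_induction_on with
  | refl => simp
  | head step _ ih =>
    obtain ⟨L, M, -, hM, hLd, hmax, rfl⟩ := step
    refine LinearIndepOn.of_filter_not_of_dual (L ⊆ ·) ?_ fun A₀ hA₀ hLA₀ => ?_
    · rw [filter_comm]
      exact ih fun M' hM' => hKR M' (mem_filter.1 hM').1
    · obtain ⟨hA₀K, hA₀c⟩ := mem_filter.1 hA₀
      obtain ⟨f, hf₀, hf⟩ :=
        exists_dual_functional_minorVector hLd hmax (hKR M hM) hA₀K hLA₀ hA₀c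
      exact ⟨f, hf₀, fun A hA hne => hf A (mem_filter.1 hA).1 (mem_filter.1 hA).2 hne⟩

end Colorful

theorem main_technical_bound_general
    (c d : ℕ) {V : Type} [Fintype V] [DecidableEq V]
    (K : Finset (Finset V)) (hK : IsComplex K) (hcoll : Collapsible d K)
    (color : V → Fin c) (r k : Fin c → ℕ)
    (hdim : ∀ i, ∀ A ∈ K, (∀ v ∈ A, color v = i) → A.card ≤ r i)
    (R : Finset V) (hR : ∀ i, (R.filter fun v => color v = i).card = r i) :
    (K.filter fun A => ∀ i, (A.filter fun v => color v = i).card = k i).card ≤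
      (Finset.univ.filter fun S : Finset V =>
        (∀ i, (S.filter fun v => color v = i).card = k i) ∧ (S \ R).card ≤ d).card := by
  let : LinearOrder V := LinearOrder.lift' _ (Fintype.equivFin V).injective
  have hKR : ∀ M ∈ K, ∀ i, #{v ∈ M | color v = i} ≤ #{v ∈ R | color v = i} :=
    fun M hM i => hR i ▸ hdim i _ (hK M hM _ (filter_subset _ _)) fun v hv => (mem_filter.1 hv).2
  have := (linearIndepOn_minorVector_of_collapsible (k := k) hcoll hKR).fintype_card_le_finrank
  simp only [coe_sort_coe, Fintype.card_coe, Module.finrank_fintype_fun_eq_card] at this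
  -- the statement decides `∀ i : Fin c` by `Nat.decidableForallFin`, not `Fintype`
  convert this using 2 <;> ext <;> simp [boundedColorfulSets]

/-- **Theorem 1.10 (main technical bound)**. Let `K` be a `d`-collapsible complex with
vertex set `V` colored by `color : V → Fin c`, where the color class of `i` has size
`n i ≥ 1`. Let `r i ≥ 1` with `dim K[N i] ≤ r i - 1` (every face inside one color
class has at most `r i` vertices), let `k i ≤ n i`, and let `R ⊆ V` meet the `i`-th
color class in exactly `r i` vertices. Then the number of `k`-colorful faces of `K`
is at most `p_k(n, d, r) = |{S ∈ binom(N, k) : |S \ R| ≤ d}|`. -/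
theorem main_technical_bound
    (c d : ℕ) (hc : 1 ≤ c) (hd : 1 ≤ d) {V : Type} [Fintype V] [DecidableEq V]
    (K : Finset (Finset V)) (hK : IsComplex K) (hcoll : Collapsible d K)
    (color : V → Fin c) (n r k : Fin c → ℕ)
    (hn : ∀ i, (Finset.univ.filter fun v => color v = i).card = n i)
    (hnpos : ∀ i, 1 ≤ n i) (hrpos : ∀ i, 1 ≤ r i)
    (hdim : ∀ i, ∀ A ∈ K, (∀ v ∈ A, color v = i) → A.card ≤ r i)
    (hk : ∀ i, k i ≤ n i)
    (R : Finset V) (hR : ∀ i, (R.filter fun v => color v = i).card = r i) :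
    (K.filter fun A => ∀ i, (A.filter fun v => color v = i).card = k i).card ≤
      (Finset.univ.filter fun S : Finset V =>
        (∀ i, (S.filter fun v => color v = i).card = k i) ∧ (S \ R).card ≤ d).card :=
  main_technical_bound_general c d K hK hcoll color r k hdim R hR
end

section
/- (Lemma 3.4(i), boosting does not decrease the colorful face density.) Let K be a simplicial complex with vertex partition N = N_1 ⊔ ⋯ ⊔ N_c with all N_i nonempty, let k = (k_1, …, k_c) be a vector of non-negative integers with k_i ≤ |N_i| for all i, and let m ≥ 1. Then δ_k(K_⟨m⟩) ≥ δ_k(K), where the density of k-colorful faces is taken with respect to the partition N_1×[m] ⊔ ⋯ ⊔ N_c×[m] of the vertex set of the boosted complex K_⟨m⟩. -/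
open scoped BigOperators

open Finset

set_option linter.unusedSectionVars false
set_option linter.unusedVariables false
set_option maxHeartbeats 1000000

/-- The boosted complex `K⟨m⟩` on vertex set `V × Fin m`: its faces are the sets whose
projection to the first coordinate is a face of `K`. -/
def boost {V : Type*} [Fintype V] [DecidableEq V] (K : Finset (Finset V)) (m : ℕ) :
    Finset (Finset (V × Fin m)) :=
  Finset.univ.filter fun B : Finset (V × Fin m) => B.image Prod.fst ∈ K

section Aux
variable {X W : Type} [Fintype X] [DecidableEq X] [DecidableEq W]



/-- L0: equal fiber cardinalities give a permutation intertwining two maps. -/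
lemma exists_perm_comp (f g : X → W)
    (h : ∀ w, (univ.filter fun x => f x = w).card = (univ.filter fun x => g x = w).card) :
    ∃ σ : Equiv.Perm X, ∀ x, g (σ x) = f x := by
  have e : ∀ w, {a // f a = w} ≃ {b // g b = w} := fun w =>
    Fintype.equivOfCardEq (by
      rw [Fintype.card_subtype, Fintype.card_subtype]; exact h w)
  exact ⟨Equiv.ofFiberEquiv e, fun x => Equiv.ofFiberEquiv_map e x⟩

/-- L1: equal color profiles give a color-preserving permutation carrying T to T'. -/
lemma exists_color_perm (χ : X → W) (T T' : Finset X)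
    (h : ∀ w, (T.filter fun x => χ x = w).card = (T'.filter fun x => χ x = w).card) :
    ∃ σ : Equiv.Perm X, (∀ x, χ (σ x) = χ x) ∧ T.map σ.toEmbedding = T' := by
  obtain ⟨σ, hσ⟩ := exists_perm_comp (fun x => (χ x, decide (x ∈ T)))
      (fun x => (χ x, decide (x ∈ T'))) (by
    rintro ⟨w, b⟩
    have htrue : ∀ U : Finset X,
        (univ.filter fun x => ((χ x, decide (x ∈ U)) : W × Bool) = (w, true))
          = U.filter fun x => χ x = w := by
      intro U; ext x; simp [Prod.ext_iff, and_comm]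
    have hfalse : ∀ U : Finset X,
        (univ.filter fun x => ((χ x, decide (x ∈ U)) : W × Bool) = (w, false)).card
          = (univ.filter fun x => χ x = w).card - (U.filter fun x => χ x = w).card := by
      intro U
      have h2 : ((univ.filter fun x => χ x = w).filter fun x => x ∈ U).card
          + ((univ.filter fun x => χ x = w).filter fun x => ¬ x ∈ U).card
          = (univ.filter fun x => χ x = w).card :=
        card_filter_add_card_filter_not _
      have h3 : ((univ.filter fun x => χ x = w).filter fun x => x ∈ U)
          = U.filter fun x => χ x = w := by
        ext x; simp [and_comm]
      have h4 : (univ.filter fun x => ((χ x, decide (x ∈ U)) : W × Bool) = (w, false))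
          = ((univ.filter fun x => χ x = w).filter fun x => ¬ x ∈ U) := by
        ext x; simp [Prod.ext_iff, and_comm]
      rw [h3] at h2; rw [h4]; omega
    cases b
    · rw [hfalse, hfalse, h w]
    · rw [htrue, htrue, h w])
  refine ⟨σ, fun x => congrArg Prod.fst (hσ x), ?_⟩
  have hmem : ∀ x, (σ x ∈ T') ↔ (x ∈ T) := by
    intro x
    have := congrArg Prod.snd (hσ x)
    simpa using this
  ext a
  rw [Finset.mem_map_equiv]
  have := hmem (σ.symm a)
  rw [Equiv.apply_symm_apply] at this
  exact this.symm





/-- Transport: counting predicates related by a permutation gives equal cardinalities. -/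
lemma card_filter_perm (e : Equiv.Perm X) (p q : Finset X → Prop)
    [DecidablePred p] [DecidablePred q]
    (h : ∀ S : Finset X, p S ↔ q (S.map e.toEmbedding)) :
    (univ.filter p).card = (univ.filter q).card := by
  have hinv : ∀ S : Finset X, (S.map e.symm.toEmbedding).map e.toEmbedding = S := by
    intro S; ext a
    simp [Finset.mem_map_equiv]
  have hinv2 : ∀ S : Finset X, (S.map e.toEmbedding).map e.symm.toEmbedding = S := by
    intro S; ext a
    simp [Finset.mem_map_equiv]
  refine Finset.card_bij' (fun S _ => S.map e.toEmbedding)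
    (fun S _ => S.map e.symm.toEmbedding) ?_ ?_ ?_ ?_
  · intro S hS
    simp only [mem_filter, mem_univ, true_and] at hS ⊢
    exact (h S).mp hS
  · intro S hS
    simp only [mem_filter, mem_univ, true_and] at hS ⊢
    exact (h _).mpr (by rw [hinv]; exact hS)
  · intro S _; exact hinv2 S
  · intro S _; exact hinv S

/-- color profile is invariant under color-preserving permutations -/
lemma prof_map (χ : X → W) (e : Equiv.Perm X) (hχ : ∀ x, χ (e x) = χ x)
    (T : Finset X) (w : W) :
    ((T.map e.toEmbedding).filter fun x => χ x = w).card = (T.filter fun x => χ x = w).card := by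
  rw [Finset.filter_map, Finset.card_map]
  congr 1
  apply Finset.filter_congr
  intro x _
  simp [hχ]

/-- gluing per-color pieces -/
lemma glue_filter (χ : X → W) (u : W → Finset X) (hu : ∀ w x, x ∈ u w → χ x = w)
    [Fintype W] (w : W) :
    ((univ.biUnion u).filter fun x => χ x = w) = u w := by
  ext x
  simp only [mem_filter, mem_biUnion, mem_univ, true_and]
  constructor
  · rintro ⟨⟨j, hj⟩, hx⟩
    obtain rfl : j = w := by rw [← hx, hu j x hj]
    exact hj
  · intro hx
    exact ⟨⟨w, hx⟩, hu w x hx⟩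

/-- existence of a superset with a prescribed (larger) profile -/
lemma exists_superset_prof [Fintype W] (χ : X → W) (T : Finset X) (k : W → ℕ)
    (htk : ∀ w, (T.filter fun x => χ x = w).card ≤ k w)
    (hkn : ∀ w, k w ≤ (univ.filter fun x => χ x = w).card) :
    ∃ S : Finset X, T ⊆ S ∧ ∀ w, (S.filter fun x => χ x = w).card = k w := by
  have hch : ∀ w : W, ∃ u : Finset X,
      (T.filter fun x => χ x = w) ⊆ u ∧ u ⊆ (univ.filter fun x => χ x = w) ∧ u.card = k w := by
    intro w
    exact Finset.exists_subsuperset_card_eq (Finset.filter_subset_filter _ (subset_univ T))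
      (htk w) (hkn w)
  choose u hu1 hu2 hu3 using hch
  refine ⟨univ.biUnion u, ?_, ?_⟩
  · intro x hx
    simp only [mem_biUnion, mem_univ, true_and]
    exact ⟨χ x, hu1 (χ x) (by simp [hx])⟩
  · intro w
    rw [glue_filter χ u (fun w x hx => (mem_filter.mp (hu2 w hx)).2) w]
    exact hu3 w

variable [Fintype W]

section Core
variable (χ : X → W)

/-- the profile of a finset -/
def prof (S : Finset X) : W → ℕ := fun w => (S.filter fun x => χ x = w).card

/-- the class of finsets with a given profile -/
noncomputable def cls (v : W → ℕ) : Finset (Finset X) :=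
  univ.filter fun S => prof χ S = v

lemma mem_cls {v : W → ℕ} {S : Finset X} : S ∈ cls χ v ↔ prof χ S = v := by
  simp [cls]

/-- constancy of relational counts: number of prof-`t` subsets of `S` only depends on prof `S`;
    number of prof-`k` supersets of `T` only depends on prof `T`. -/
lemma count_sub_const {t : W → ℕ} {S S' : Finset X} (h : prof χ S = prof χ S') :
    ((cls χ t).filter fun T => T ⊆ S).card = ((cls χ t).filter fun T => T ⊆ S').card := by
  obtain ⟨σ, hσc, hσm⟩ := exists_color_perm χ S S' (fun w => congrFun h w)
  have e1 : (cls χ t).filter (fun T => T ⊆ S) = univ.filter fun T => prof χ T = t ∧ T ⊆ S := by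
    rw [cls, filter_filter]
  have e2 : (cls χ t).filter (fun T => T ⊆ S') = univ.filter fun T => prof χ T = t ∧ T ⊆ S' := by
    rw [cls, filter_filter]
  rw [e1, e2]
  apply card_filter_perm σ
  intro T
  have hp : prof χ (T.map σ.toEmbedding) = prof χ T := funext fun w => prof_map χ σ hσc T w
  rw [hp, ← hσm]
  constructor
  · rintro ⟨h1, h2⟩; exact ⟨h1, Finset.map_subset_map.mpr h2⟩
  · rintro ⟨h1, h2⟩; exact ⟨h1, Finset.map_subset_map.mp h2⟩

lemma count_sup_const {kk : W → ℕ} {T T' : Finset X} (h : prof χ T = prof χ T') :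
    ((cls χ kk).filter fun S => T ⊆ S).card = ((cls χ kk).filter fun S => T' ⊆ S).card := by
  obtain ⟨σ, hσc, hσm⟩ := exists_color_perm χ T T' (fun w => congrFun h w)
  have e1 : (cls χ kk).filter (fun S => T ⊆ S) = univ.filter fun S => prof χ S = kk ∧ T ⊆ S := by
    rw [cls, filter_filter]
  have e2 : (cls χ kk).filter (fun S => T' ⊆ S)
      = univ.filter fun S => prof χ S = kk ∧ T' ⊆ S := by
    rw [cls, filter_filter]
  rw [e1, e2]
  apply card_filter_perm σ
  intro S
  have hp : prof χ (S.map σ.toEmbedding) = prof χ S := funext fun w => prof_map χ σ hσc S w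
  rw [hp, ← hσm]
  constructor
  · rintro ⟨h1, h2⟩; exact ⟨h1, Finset.map_subset_map.mpr h2⟩
  · rintro ⟨h1, h2⟩; exact ⟨h1, Finset.map_subset_map.mp h2⟩

/-- Core density monotonicity, counting form. -/
lemma core_ineq (K : Finset (Finset X)) (hK : IsComplex K)
    (k t : W → ℕ) (hkn : ∀ w, k w ≤ (univ.filter fun x => χ x = w).card)
    (htk : ∀ w, t w ≤ k w) (hT0 : (cls χ t).Nonempty) :
    ((cls χ k).filter fun S => S ∈ K).card * (cls χ t).card ≤
      ((cls χ t).filter fun T => T ∈ K).card * (cls χ k).card := by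
  classical
  obtain ⟨T0, hT0m⟩ := hT0
  have hT0p : prof χ T0 = t := (mem_cls χ).mp hT0m
  -- a profile-k set exists
  obtain ⟨S0, -, hS0p⟩ := exists_superset_prof χ (∅ : Finset X) k (by simp) hkn
  have hS0m : S0 ∈ cls χ k := (mem_cls χ).mpr (funext hS0p)
  set c1 : ℕ := ((cls χ t).filter fun T => T ⊆ S0).card with hc1
  set c2 : ℕ := ((cls χ k).filter fun S => T0 ⊆ S).card with hc2
  -- c2 ≥ 1
  have hc2pos : 1 ≤ c2 := by
    obtain ⟨S1, hS1sub, hS1p⟩ := exists_superset_prof χ T0 k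
      (fun w => by rw [show (T0.filter fun x => χ x = w).card = t w from congrFun hT0p w]; exact htk w) hkn
    have : S1 ∈ (cls χ k).filter fun S => T0 ⊆ S := by
      simp only [mem_filter, mem_cls]
      exact ⟨funext hS1p, hS1sub⟩
    exact Finset.card_pos.mpr ⟨S1, this⟩
  -- swap identity machinery
  have swap : ∀ A : Finset (Finset X), ∀ B : Finset (Finset X),
      (∑ S ∈ A, (B.filter fun T => T ⊆ S).card)
        = ∑ T ∈ B, (A.filter fun S => T ⊆ S).card := by
    intro A B
    simp only [Finset.card_filter]
    rw [Finset.sum_comm]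
  -- totals
  have total : (cls χ k).card * c1 = (cls χ t).card * c2 := by
    have l1 : (∑ S ∈ cls χ k, ((cls χ t).filter fun T => T ⊆ S).card)
        = (cls χ k).card * c1 := by
      rw [Finset.sum_congr rfl fun S hS =>
        count_sub_const χ (by rw [(mem_cls χ).mp hS, (mem_cls χ).mp hS0m] : prof χ S = prof χ S0)]
      simp [mul_comm, hc1]
    have l2 : (∑ T ∈ cls χ t, ((cls χ k).filter fun S => T ⊆ S).card)
        = (cls χ t).card * c2 := by
      rw [Finset.sum_congr rfl fun T hT =>
        count_sup_const χ (by rw [(mem_cls χ).mp hT, (mem_cls χ).mp hT0m] : prof χ T = prof χ T0)]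
      simp [mul_comm, hc2]
    rw [← l1, ← l2, swap]
  -- faces inequality
  have faces : ((cls χ k).filter fun S => S ∈ K).card * c1 ≤
      ((cls χ t).filter fun T => T ∈ K).card * c2 := by
    have l1 : (∑ S ∈ (cls χ k).filter fun S => S ∈ K, ((cls χ t).filter fun T => T ⊆ S).card)
        = ((cls χ k).filter fun S => S ∈ K).card * c1 := by
      rw [Finset.sum_congr rfl fun S hS => count_sub_const χ
        (by rw [(mem_cls χ).mp (Finset.mem_of_mem_filter S hS), (mem_cls χ).mp hS0m] :
          prof χ S = prof χ S0)]
      simp [mul_comm, hc1]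
    have l2 : (∑ T ∈ (cls χ t).filter fun T => T ∈ K, ((cls χ k).filter fun S => T ⊆ S).card)
        = ((cls χ t).filter fun T => T ∈ K).card * c2 := by
      rw [Finset.sum_congr rfl fun T hT => count_sup_const χ
        (by rw [(mem_cls χ).mp (Finset.mem_of_mem_filter T hT), (mem_cls χ).mp hT0m] :
          prof χ T = prof χ T0)]
      simp [mul_comm, hc2]
    rw [← l1, ← l2]
    -- restrict the inner sum of l1 to faces T
    have step1 : ∀ S ∈ (cls χ k).filter fun S => S ∈ K,
        ((cls χ t).filter fun T => T ⊆ S).card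
          = (((cls χ t).filter fun T => T ∈ K).filter fun T => T ⊆ S).card := by
      intro S hS
      have hSK : S ∈ K := (Finset.mem_filter.mp hS).2
      congr 1
      rw [filter_filter]
      apply Finset.filter_congr
      intro T hT
      constructor
      · intro h2; exact ⟨hK S hSK T h2, h2⟩
      · rintro ⟨-, h2⟩; exact h2
    rw [Finset.sum_congr rfl step1, swap]
    apply Finset.sum_le_sum
    intro T hT
    apply Finset.card_le_card
    apply Finset.filter_subset_filter
    exact Finset.filter_subset _ _
  -- conclude:  FK * b_t ≤ f_t * b_k  by cancelling c2
  have key : (((cls χ k).filter fun S => S ∈ K).card * (cls χ t).card) * c2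
      ≤ (((cls χ t).filter fun T => T ∈ K).card * (cls χ k).card) * c2 := by
    calc (((cls χ k).filter fun S => S ∈ K).card * (cls χ t).card) * c2
        = ((cls χ k).filter fun S => S ∈ K).card * ((cls χ t).card * c2) := by ring
      _ = ((cls χ k).filter fun S => S ∈ K).card * ((cls χ k).card * c1) := by rw [← total]
      _ = (((cls χ k).filter fun S => S ∈ K).card * c1) * (cls χ k).card := by ring
      _ ≤ (((cls χ t).filter fun T => T ∈ K).card * c2) * (cls χ k).card :=
          Nat.mul_le_mul_right _ faces
      _ = (((cls χ t).filter fun T => T ∈ K).card * (cls χ k).card) * c2 := by ring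
  exact Nat.le_of_mul_le_mul_right key hc2pos

end Core
end Aux


/-- **Lemma 3.4(i)**: boosting does not decrease the density of `k`-colorful faces.
The vertex set `V` is colored by `color : V → Fin c` with nonempty color classes and
`k i ≤ |N i|`; the boosted complex `K⟨m⟩` is colored via the first coordinate. The
density `δ_k` is the number of `k`-colorful faces divided by `|binom(N, k)|`. -/
theorem boost_density_ge
    (c : ℕ) (hc : 1 ≤ c) {V : Type} [Fintype V] [DecidableEq V]
    (K : Finset (Finset V)) (hK : IsComplex K)
    (color : V → Fin c)
    (hne : ∀ i, 1 ≤ (Finset.univ.filter fun v => color v = i).card)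
    (k : Fin c → ℕ) (hk : ∀ i, k i ≤ (Finset.univ.filter fun v => color v = i).card)
    (m : ℕ) (hm : 1 ≤ m) :
    ((K.filter fun A => ∀ i, (A.filter fun v => color v = i).card = k i).card : ℝ) /
        ((Finset.univ.filter fun S : Finset V =>
          ∀ i, (S.filter fun v => color v = i).card = k i).card : ℝ) ≤
      (((boost K m).filter fun B =>
          ∀ i, (B.filter fun p => color p.1 = i).card = k i).card : ℝ) /
        ((Finset.univ.filter fun S : Finset (V × Fin m) =>
          ∀ i, (S.filter fun p => color p.1 = i).card = k i).card : ℝ) := by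
  classical
  set χY : V × Fin m → Fin c := fun p => color p.1 with hχY
  -- rewrite the four finsets into `cls` form
  have eBK : (Finset.univ.filter fun S : Finset V =>
      ∀ i, (S.filter fun v => color v = i).card = k i) = cls color k := by
    ext S; simp [cls, prof, funext_iff]
  have eFK : (K.filter fun A => ∀ i, (A.filter fun v => color v = i).card = k i)
      = (cls color k).filter fun S => S ∈ K := by
    ext A; simp [cls, prof, funext_iff, and_comm]
  have eBb : (Finset.univ.filter fun S : Finset (V × Fin m) =>
      ∀ i, (S.filter fun p => color p.1 = i).card = k i) = cls χY k := by
    ext S; simp [cls, prof, funext_iff, hχY]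
  have eFb : ((boost K m).filter fun B =>
      ∀ i, (B.filter fun p => color p.1 = i).card = k i)
      = (cls χY k).filter fun B => B.image Prod.fst ∈ K := by
    ext B; simp [boost, cls, prof, funext_iff, hχY, and_comm]
  rw [eBK, eFK, eBb, eFb]
  -- color class sizes in the product
  have hknY : ∀ i, k i ≤ (univ.filter fun p : V × Fin m => χY p = i).card := by
    intro i
    refine le_trans (hk i) ?_
    apply Finset.card_le_card_of_injOn (fun v => (v, ⟨0, hm⟩))
    · intro v hv
      simp only [mem_filter, mem_univ, true_and] at hv ⊢
      simpa [hχY] using hv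
    · intro a _ b _ hab
      exact congrArg Prod.fst hab
  -- nonemptiness of the two "binomial" sets
  have hBK : (cls color k).Nonempty := by
    obtain ⟨S, -, hS⟩ := exists_superset_prof color (∅ : Finset V) k (by simp) hk
    exact ⟨S, (mem_cls _).mpr (funext hS)⟩
  have hBb : (cls χY k).Nonempty := by
    obtain ⟨S, -, hS⟩ := exists_superset_prof χY (∅ : Finset (V × Fin m)) k (by simp) hknY
    exact ⟨S, (mem_cls _).mpr (funext hS)⟩
  have hBKpos : (0:ℝ) < ((cls color k).card : ℝ) := by
    exact_mod_cast Finset.card_pos.mpr hBK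
  have hBbpos : (0:ℝ) < ((cls χY k).card : ℝ) := by
    exact_mod_cast Finset.card_pos.mpr hBb
  rw [div_le_div_iff₀ hBKpos hBbpos]
  -- reduce to the ℕ inequality
  have main : ((cls color k).filter fun S => S ∈ K).card * (cls χY k).card ≤
      ((cls χY k).filter fun B => B.image Prod.fst ∈ K).card * (cls color k).card := by
    -- fiberwise over the projection T = image fst
    set w : Finset V → ℕ :=
      fun T => ((cls χY k).filter fun B => B.image Prod.fst = T).card with hw
    have hBbsum : (cls χY k).card = ∑ T ∈ (univ : Finset (Finset V)), w T :=
      Finset.card_eq_sum_card_fiberwise (fun B _ => mem_univ _)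
    have hFbsum : ((cls χY k).filter fun B => B.image Prod.fst ∈ K).card
        = ∑ T ∈ (univ : Finset (Finset V)), if T ∈ K then w T else 0 := by
      rw [Finset.card_eq_sum_card_fiberwise
        (f := fun B => B.image Prod.fst) (t := (univ : Finset (Finset V)))
        (fun B _ => mem_univ _)]
      refine Finset.sum_congr rfl fun T _ => ?_
      by_cases hT : T ∈ K
      · rw [if_pos hT, hw]
        simp only []
        rw [filter_filter]
        congr 1
        apply Finset.filter_congr
        intro B _
        constructor
        · rintro ⟨-, h2⟩; exact h2
        · intro h2; exact ⟨by rw [h2]; exact hT, h2⟩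
      · rw [if_neg hT]
        rw [Finset.card_eq_zero, filter_filter, Finset.filter_eq_empty_iff]
        rintro B - ⟨h1, h2⟩
        exact hT (h2 ▸ h1)
    -- group T's by profile
    have hgroup : ∀ F : Finset V → ℕ,
        ∑ T ∈ (univ : Finset (Finset V)), F T
          = ∑ t' ∈ (univ : Finset (Finset V)).image (prof color),
              ∑ T ∈ cls color t', F T := by
      intro F
      rw [← Finset.sum_fiberwise_of_maps_to (fun T _ => Finset.mem_image_of_mem (prof color) (mem_univ T)) F]
      rfl
    rw [hBbsum, hFbsum, hgroup, hgroup, Finset.mul_sum, Finset.sum_mul]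
    apply Finset.sum_le_sum
    intro t' ht'
    obtain ⟨T0, -, hT0p⟩ := Finset.mem_image.mp ht'
    have hT0m : T0 ∈ cls color t' := (mem_cls _).mpr hT0p
    by_cases hcase : ∀ i, t' i ≤ k i
    · -- constancy of w on the class
      have wconst : ∀ T ∈ cls color t', w T = w T0 := by
        intro T hT
        obtain ⟨σ, hσc, hσm⟩ := exists_color_perm color T T0
          (fun i => by rw [show (T.filter fun x => color x = i).card = t' i from congrFun ((mem_cls _).mp hT) i,
            show (T0.filter fun x => color x = i).card = t' i from congrFun hT0p i])
        have e1 : ∀ U : Finset V, (cls χY k).filter (fun B => B.image Prod.fst = U)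
            = univ.filter fun B => prof χY B = k ∧ B.image Prod.fst = U := by
          intro U; rw [cls, filter_filter]
        rw [hw]
        simp only []
        rw [e1, e1]
        set e : Equiv.Perm (V × Fin m) := σ.prodCongr (Equiv.refl (Fin m)) with he
        apply card_filter_perm e
        intro B
        have hχe : ∀ p : V × Fin m, χY (e p) = χY p := by
          intro p; simp [he, hχY, hσc]
        have hp : prof χY (B.map e.toEmbedding) = prof χY B :=
          funext fun i => prof_map χY e hχe B i
        have himg : (B.map e.toEmbedding).image Prod.fst
            = (B.image Prod.fst).map σ.toEmbedding := by
          rw [Finset.map_eq_image, Finset.map_eq_image, Finset.image_image,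
            Finset.image_image]
          congr 1
        rw [hp, himg, ← hσm, Finset.map_inj]
      have hsum1 : ∑ T ∈ cls color t', w T = (cls color t').card * w T0 := by
        rw [Finset.sum_congr rfl wconst]; simp [mul_comm]
      have hsum2 : ∑ T ∈ cls color t', (if T ∈ K then w T else 0)
          = ((cls color t').filter fun T => T ∈ K).card * w T0 := by
        rw [← Finset.sum_filter]
        rw [Finset.sum_congr rfl fun T hT => wconst T (Finset.mem_of_mem_filter T hT)]
        simp [mul_comm]
      rw [hsum1, hsum2]
      have hcore := core_ineq color K hK k t' hk hcase ⟨T0, hT0m⟩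
      calc ((cls color k).filter fun S => S ∈ K).card * ((cls color t').card * w T0)
          = (((cls color k).filter fun S => S ∈ K).card * (cls color t').card) * w T0 := by ring
        _ ≤ (((cls color t').filter fun T => T ∈ K).card * (cls color k).card) * w T0 :=
            Nat.mul_le_mul_right _ hcore
        _ = ((cls color t').filter fun T => T ∈ K).card * w T0 * (cls color k).card := by ring
    · -- infeasible profile: w vanishes on the class
      push_neg at hcase
      obtain ⟨i0, hi0⟩ := hcase
      have wzero : ∀ T ∈ cls color t', w T = 0 := by
        intro T hT
        rw [hw]
        simp only []
        rw [Finset.card_eq_zero, Finset.filter_eq_empty_iff]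
        intro B hB hBT
        have h1 : prof χY B = k := (mem_cls _).mp hB
        have h2 : (T.filter fun v => color v = i0).card = t' i0 := congrFun ((mem_cls _).mp hT) i0
        have h3 : ((B.filter fun p => χY p = i0).image Prod.fst).card
            ≤ (B.filter fun p => χY p = i0).card := Finset.card_image_le
        have h4 : (B.image Prod.fst).filter (fun v => color v = i0)
            = (B.filter fun p => χY p = i0).image Prod.fst := by
          rw [Finset.filter_image]
        have h5 : (B.filter fun p => χY p = i0).card = k i0 := congrFun h1 i0
        rw [hBT] at h4
        have h4' := congrArg Finset.card h4
        omega
      have z1 : ∑ T ∈ cls color t', w T = 0 :=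
        Finset.sum_eq_zero wzero
      have z2 : ∑ T ∈ cls color t', (if T ∈ K then w T else 0) = 0 :=
        Finset.sum_eq_zero fun T hT => by simp [wzero T hT]
      rw [z1, z2]
      simp
  calc (((cls color k).filter fun S => S ∈ K).card : ℝ) * ((cls χY k).card : ℝ)
      = ((((cls color k).filter fun S => S ∈ K).card * (cls χY k).card : ℕ) : ℝ) := by
        push_cast; ring
    _ ≤ ((((cls χY k).filter fun B => B.image Prod.fst ∈ K).card * (cls color k).card : ℕ) : ℝ) := by
        exact_mod_cast main
    _ = (((cls χY k).filter fun B => B.image Prod.fst ∈ K).card : ℝ) * ((cls color k).card : ℝ) := by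
        push_cast; ring
end

section
/- (Lemma 3.4(ii), boosting preserves d-collapsibility.) Let K be a simplicial complex on a finite vertex set N, let d ≥ 1 and m ≥ 1. If K is d-collapsible, then the boosted complex K_⟨m⟩ on vertex set N × [m] is d-collapsible as well. -/
open scoped BigOperators

namespace BoostAux

variable {V : Type} [Fintype V] [DecidableEq V]

/-- The section of `L` determined by `f`. -/
def sec (L : Finset V) {m : ℕ} (f : V → Fin m) : Finset (V × Fin m) :=
  L.image fun v => (v, f v)

lemma sec_inj {m : ℕ} (f : V → Fin m) :
    Function.Injective fun v : V => (v, f v) := fun a b h => congrArg Prod.fst h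

lemma mem_sec {L : Finset V} {m : ℕ} {f : V → Fin m} {p : V × Fin m} :
    p ∈ sec L f ↔ p.1 ∈ L ∧ p.2 = f p.1 := by
  simp only [sec, Finset.mem_image, Prod.ext_iff]
  constructor
  · rintro ⟨v, hv, h1, h2⟩
    subst h1
    exact ⟨hv, h2.symm⟩
  · rintro ⟨h1, h2⟩
    exact ⟨p.1, h1, rfl, h2.symm⟩

lemma image_fst_sec (L : Finset V) {m : ℕ} (f : V → Fin m) :
    (sec L f).image Prod.fst = L := by
  rw [sec, Finset.image_image]
  exact Finset.image_id

lemma card_sec (L : Finset V) {m : ℕ} (f : V → Fin m) :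
    (sec L f).card = L.card :=
  Finset.card_image_of_injective _ (sec_inj f)

lemma sec_subset_iff {L : Finset V} {m : ℕ} {f : V → Fin m} {B : Finset (V × Fin m)} :
    sec L f ⊆ B ↔ ∀ v ∈ L, (v, f v) ∈ B := by
  simp [sec, Finset.image_subset_iff]

/-- The weight of a subset of `V × Fin m`. -/
def secw {m : ℕ} (S : Finset (V × Fin m)) : ℕ := ∑ p ∈ S, (p.2 : ℕ)

lemma secw_sec (L : Finset V) {m : ℕ} (f : V → Fin m) :
    secw (sec L f) = ∑ v ∈ L, (f v : ℕ) := by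
  rw [secw, sec, Finset.sum_image]
  intro a _ b _ h
  exact sec_inj f h

/-- The intermediate complexes in the collapsing sequence. -/
def Cpx (K : Finset (Finset V)) (m : ℕ) (s : List (Finset (V × Fin m))) :
    Finset (Finset (V × Fin m)) :=
  (boost K m).filter fun B => ∀ S ∈ s, ¬ S ⊆ B

lemma mem_Cpx {K : Finset (Finset V)} {m : ℕ} {s : List (Finset (V × Fin m))}
    {B : Finset (V × Fin m)} :
    B ∈ Cpx K m s ↔ B.image Prod.fst ∈ K ∧ ∀ S ∈ s, ¬ S ⊆ B := by
  simp [Cpx, boost]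

lemma Cpx_nil (K : Finset (Finset V)) (m : ℕ) : Cpx K m [] = boost K m := by
  ext B; simp [mem_Cpx, boost]

lemma Cpx_append (K : Finset (Finset V)) (m : ℕ) (s : List (Finset (V × Fin m)))
    (S : Finset (V × Fin m)) :
    Cpx K m (s ++ [S]) = (Cpx K m s).filter fun B => ¬ S ⊆ B := by
  ext B
  simp only [Finset.mem_filter, mem_Cpx, List.mem_append, List.mem_singleton]
  constructor
  · intro ⟨h1, h2⟩
    exact ⟨⟨h1, fun S' hS' => h2 S' (Or.inl hS')⟩, h2 S (Or.inr rfl)⟩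
  · rintro ⟨⟨h1, h2⟩, h3⟩
    refine ⟨h1, fun S' hS' => ?_⟩
    rcases hS' with h | rfl
    · exact h2 S' h
    · exact h3

/-- Simulating one elementary collapse in the boosted complex. -/
lemma boost_elem {K K' : Finset (Finset V)} {d m : ℕ} (hm : 1 ≤ m)
    (h : ElemCollapse d K K') :
    Relation.ReflTransGen (ElemCollapse d) (boost K m) (boost K' m) := by
  obtain ⟨L, M, hL, hM, hcard, hmax, hK'⟩ := h
  have hLM : L ⊆ M := hmax L hL (subset_refl L)
  classical
  -- the set of all sections of `L`
  set allS : Finset (Finset (V × Fin m)) :=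
    (Finset.univ : Finset (V → Fin m)).image (sec L) with hallS
  -- sorted list of sections by weight
  set r : Finset (V × Fin m) → Finset (V × Fin m) → Prop :=
    fun a b => secw a ≤ secw b with hr
  haveI hrdec : DecidableRel r := fun a b => by
    simp only [hr]; infer_instance
  haveI : IsTotal (Finset (V × Fin m)) r := ⟨fun a b => le_total _ _⟩
  haveI : IsTrans (Finset (V × Fin m)) r := ⟨fun a b c => le_trans⟩
  set secs : List (Finset (V × Fin m)) := allS.toList.insertionSort r with hsecs
  have hnd : secs.Nodup :=
    (List.perm_insertionSort r allS.toList).nodup_iff.mpr (Finset.nodup_toList _)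
  have hmem : ∀ S, S ∈ secs ↔ S ∈ allS := fun S => by
    rw [hsecs, (List.perm_insertionSort r allS.toList).mem_iff, Finset.mem_toList]
  have hsorted : secs.Pairwise r := List.pairwise_insertionSort r _
  -- elements of `take n` are earlier in the order
  have htake_mem : ∀ n (hn : n < secs.length), ∀ S' ∈ secs.take n,
      S' ∈ allS ∧ S' ≠ secs[n] ∧ secw S' ≤ secw secs[n] := by
    intro n hn S' hS'
    have hS'secs : S' ∈ secs := List.mem_of_mem_take hS'
    obtain ⟨i, hi, hgi⟩ := List.getElem_of_mem hS'
    have hin : i < n := lt_of_lt_of_le hi (by rw [List.length_take]; exact min_le_left _ _)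
    have hgi' : secs[i] = S' := by rw [← List.getElem_take]; exact hgi
    refine ⟨(hmem S').mp hS'secs, ?_, ?_⟩
    · intro hEq
      have : i = n := (List.Nodup.getElem_inj_iff hnd).mp (by rw [hgi', hEq])
      omega
    · have := hsorted.rel_get_of_lt (a := ⟨i, by omega⟩) (b := ⟨n, hn⟩) (by simp [Fin.lt_def]; omega)
      simp only [List.get_eq_getElem] at this
      rw [← hgi']
      exact this
  -- sections of smaller weight are in `take n`
  have hin_take : ∀ n (hn : n < secs.length), ∀ S' ∈ allS,
      secw S' < secw secs[n] → S' ∈ secs.take n := by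
    intro n hn S' hS' hw
    obtain ⟨i, hi, hgi⟩ := List.getElem_of_mem ((hmem S').mpr hS')
    have hin : i < n := by
      by_contra hcon
      push_neg at hcon
      rcases eq_or_lt_of_le hcon with heq | hlt
      · subst heq
        have hb : secs[n] = S' := hgi
        rw [hb] at hw
        omega
      · have := hsorted.rel_get_of_lt (a := ⟨n, hn⟩) (b := ⟨i, hi⟩) (by simp [Fin.lt_def]; omega)
        simp only [List.get_eq_getElem] at this
        rw [hgi] at this
        simp only [hr] at this
        omega
    have hlt' : i < (secs.take n).length := by
      rw [List.length_take]; omega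
    have : (secs.take n)[i] = S' := by rw [List.getElem_take]; exact hgi
    rw [← this]
    exact List.getElem_mem _
  -- the elementary collapse at step `n`
  have hstep : ∀ n (hn : n < secs.length),
      ElemCollapse d (Cpx K m (secs.take n)) (Cpx K m (secs.take (n + 1))) := by
    intro n hn
    obtain ⟨f, -, hSf⟩ := Finset.mem_image.mp ((hmem secs[n]).mp (List.getElem_mem hn))
    -- the unique maximal face
    set Mk : Finset (V × Fin m) :=
      (M ×ˢ (Finset.univ : Finset (Fin m))).filter fun p => p.1 ∈ L → f p.1 ≤ p.2 with hMk
    have mem_Mk : ∀ p : V × Fin m, p ∈ Mk ↔ p.1 ∈ M ∧ (p.1 ∈ L → f p.1 ≤ p.2) := by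
      intro p; simp [hMk, Finset.mem_product]
    refine ⟨secs[n], Mk, ?_, ?_, ?_, ?_, ?_⟩
    · -- secs[n] ∈ current complex
      rw [mem_Cpx]
      constructor
      · rw [← hSf, image_fst_sec]; exact hL
      · intro S' hS' hsub
        obtain ⟨hS'allS, hne, -⟩ := htake_mem n hn S' hS'
        obtain ⟨f', -, hSf'⟩ := Finset.mem_image.mp hS'allS
        have hcards : secs[n].card ≤ S'.card := by
          rw [← hSf, ← hSf', card_sec, card_sec]
        exact hne (Finset.eq_of_subset_of_card_le hsub hcards)
    · -- Mk ∈ current complex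
      rw [mem_Cpx]
      have himg : Mk.image Prod.fst = M := by
        apply subset_antisymm
        · rw [Finset.image_subset_iff]
          intro p hp
          exact ((mem_Mk p).mp hp).1
        · intro v hv
          rw [Finset.mem_image]
          refine ⟨(v, ⟨m - 1, by omega⟩), ?_, rfl⟩
          rw [mem_Mk]
          refine ⟨hv, fun _ => ?_⟩
          rw [Fin.le_def]
          have := (f v).isLt
          simp only []
          omega
      constructor
      · rw [himg]; exact hM
      · intro S' hS' hsub
        obtain ⟨hS'allS, hne, hwle⟩ := htake_mem n hn S' hS'
        obtain ⟨f', -, hSf'⟩ := Finset.mem_image.mp hS'allS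
        -- f ≤ f' pointwise on L
        have hpt : ∀ v ∈ L, f v ≤ f' v := by
          intro v hv
          have : (v, f' v) ∈ Mk := hsub (by rw [← hSf']; exact mem_sec.mpr ⟨hv, rfl⟩)
          exact ((mem_Mk _).mp this).2 hv
        have hwge : secw secs[n] ≤ secw S' := by
          rw [← hSf, ← hSf', secw_sec, secw_sec]
          exact Finset.sum_le_sum fun v hv => Fin.le_def.mp (hpt v hv)
        have hweq : secw S' = secw secs[n] := le_antisymm hwle hwge
        have hsum : ∑ v ∈ L, ((f v : ℕ)) = ∑ v ∈ L, ((f' v : ℕ)) := by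
          have h1 : secw (sec L f) = secw (sec L f') := by rw [hSf, hSf', hweq]
          rwa [secw_sec, secw_sec] at h1
        have hfeq : ∀ v ∈ L, (f v : ℕ) = (f' v : ℕ) :=
          (Finset.sum_eq_sum_iff_of_le fun v hv => Fin.le_def.mp (hpt v hv)).mp hsum
        apply hne
        rw [← hSf', ← hSf]
        apply Finset.image_congr
        intro v hv
        simp only []
        congr 1
        exact Fin.val_injective (hfeq v hv).symm
    · -- cardinality bound
      rw [← hSf, card_sec]; exact hcard
    · -- maximality
      intro B hB hsub
      rw [mem_Cpx] at hB
      obtain ⟨hBK, hBtake⟩ := hB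
      have hsub' : sec L f ⊆ B := by rw [hSf]; exact hsub
      have hLB : L ⊆ B.image Prod.fst := by
        calc L = (sec L f).image Prod.fst := (image_fst_sec L f).symm
          _ ⊆ B.image Prod.fst := Finset.image_subset_image hsub'
      have hBM : B.image Prod.fst ⊆ M := hmax _ hBK hLB
      intro p hp
      rw [mem_Mk]
      refine ⟨hBM (Finset.mem_image_of_mem Prod.fst hp), ?_⟩
      intro hv
      by_contra hlt
      push_neg at hlt
      -- build a strictly smaller section inside B
      set f'' : V → Fin m := Function.update f p.1 p.2 with hf''
      have hsub'' : sec L f'' ⊆ B := by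
        rw [sec_subset_iff]
        intro v hvL
        by_cases hvp : v = p.1
        · subst hvp
          rw [hf'', Function.update_self]
          exact hp
        · rw [hf'', Function.update_of_ne hvp]
          exact hsub' (mem_sec.mpr ⟨hvL, rfl⟩)
      have hwlt : secw (sec L f'') < secw (sec L f) := by
        rw [secw_sec, secw_sec]
        apply Finset.sum_lt_sum
        · intro v hvL
          by_cases hvp : v = p.1
          · subst hvp
            rw [hf'', Function.update_self]
            exact le_of_lt (Fin.lt_def.mp hlt)
          · rw [hf'', Function.update_of_ne hvp]
        · refine ⟨p.1, hv, ?_⟩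
          rw [hf'', Function.update_self]
          exact Fin.lt_def.mp hlt
      have h'' : sec L f'' ∈ secs.take n := by
        apply hin_take n hn
        · exact Finset.mem_image_of_mem _ (Finset.mem_univ f'')
        · rw [← hSf]; exact hwlt
      exact hBtake _ h'' hsub''
    · -- the resulting complex
      have htake : secs.take (n + 1) = secs.take n ++ [secs[n]] := by
        rw [List.take_succ, List.getElem?_eq_getElem hn]
        rfl
      rw [htake, Cpx_append]
  -- chain the collapses
  have hchain : ∀ n, Relation.ReflTransGen (ElemCollapse d)
      (Cpx K m []) (Cpx K m (secs.take n)) := by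
    intro n
    induction n with
    | zero => exact Relation.ReflTransGen.refl
    | succ n ih =>
      by_cases hn : n < secs.length
      · exact ih.tail (hstep n hn)
      · push_neg at hn
        have : secs.take (n + 1) = secs.take n := by
          rw [List.take_of_length_le hn, List.take_of_length_le (by omega)]
        rw [this]
        exact ih
  have hfinal := hchain secs.length
  rw [List.take_length, Cpx_nil] at hfinal
  -- identify the final complex with boost K' m
  have hend : Cpx K m secs = boost K' m := by
    ext B
    rw [mem_Cpx]
    subst hK'
    simp only [boost, Finset.mem_filter, Finset.mem_univ, true_and]
    constructor
    · rintro ⟨h1, h2⟩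
      refine ⟨h1, fun hLB => ?_⟩
      have hch : ∀ v : V, ∃ i : Fin m, v ∈ L → (v, i) ∈ B := by
        intro v
        by_cases hvL : v ∈ L
        · obtain ⟨p, hp, hfst⟩ := Finset.mem_image.mp (hLB hvL)
          exact ⟨p.2, fun _ => by rw [← hfst]; exact hp⟩
        · exact ⟨⟨0, by omega⟩, fun hc => absurd hc hvL⟩
      choose f hf using hch
      exact h2 (sec L f)
        ((hmem _).mpr (Finset.mem_image_of_mem _ (Finset.mem_univ f)))
        (sec_subset_iff.mpr fun v hvL => hf v hvL)
    · rintro ⟨h1, h2⟩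
      refine ⟨h1, fun S hS hSB => h2 ?_⟩
      obtain ⟨f, -, rfl⟩ := Finset.mem_image.mp ((hmem S).mp hS)
      calc L = (sec L f).image Prod.fst := (image_fst_sec L f).symm
        _ ⊆ B.image Prod.fst := Finset.image_subset_image hSB
  rw [hend] at hfinal
  exact hfinal

end BoostAux

/-- **Lemma 3.4(ii)**: boosting preserves `d`-collapsibility. -/
theorem boost_collapsible
    {V : Type} [Fintype V] [DecidableEq V] (K : Finset (Finset V)) (hK : IsComplex K)
    (d m : ℕ) (hd : 1 ≤ d) (hm : 1 ≤ m) (hcoll : Collapsible d K) :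
    Collapsible d (boost K m) := by
  have hlift := Relation.ReflTransGen.lift' (fun J : Finset (Finset V) => boost J m)
    (fun a b hab => BoostAux.boost_elem hm hab) _ _ hcoll
  have hempty : boost (∅ : Finset (Finset V)) m = ∅ := by
    ext B; simp [boost]
  have hlift' : Relation.ReflTransGen (ElemCollapse d) (boost K m)
      (boost (∅ : Finset (Finset V)) m) := hlift
  rw [hempty] at hlift'
  exact hlift'
end

section
/- (Vertex splitting preserves d-collapsibility; key step of the proof of Lemma 3.4(ii).) Let K be a simplicial complex on a finite vertex set V, let v ∈ V, let v_1, v_2 ∉ V be two new vertices, and let K^{v→v_1,v_2} be the complex obtained from K by splitting v into v_1 and v_2. If K is d-collapsible for some d ≥ 1, then K^{v→v_1,v_2} is d-collapsible. -/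
open scoped BigOperators

/-- The split complex `K^{v → v₁, v₂}`, on the vertex set `{u : V // u ≠ v} ⊕ Fin 2`
(the vertices other than `v`, together with the two new copies `v₁, v₂` of `v`): its
faces are exactly the sets whose image, under the map identifying both `v₁` and `v₂`
with `v`, is a face of `K`. -/
def splitComplex {V : Type*} [Fintype V] [DecidableEq V] (K : Finset (Finset V)) (v : V) :
    Finset (Finset ({u : V // u ≠ v} ⊕ Fin 2)) :=
  Finset.univ.filter fun B : Finset ({u : V // u ≠ v} ⊕ Fin 2) =>
    B.image (Sum.elim Subtype.val fun _ => v) ∈ K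

/-! Let `π` glue the two copies of `v` back together, and let `L₀`, `L₁` be the lifts of a face `L`
that use copy `0`, resp. copy `1`, of `v` (so `L₀ = L₁` when `v ∉ L`). A face `B` of the split
complex satisfies `L ⊆ π B` iff it contains `L₀` or `L₁`, so a collapse of `K` at `L` with maximal
coface `M` is mirrored by collapsing the split complex at `L₀` and then at `L₁`. Both lifts have
`|L|` vertices; the maximal coface of `L₀` is the full preimage of `M`, and once the faces
containing `L₀` are gone, a face containing `L₁` cannot contain copy `0` of `v`, so the preimage of
`M` minus that vertex is the maximal coface of `L₁`. -/

namespace SplitComplex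

section Proj

variable {V : Type*} {v : V}

def proj (v : V) : {u : V // u ≠ v} ⊕ Fin 2 → V :=
  Sum.elim Subtype.val fun _ => v

@[simp] lemma proj_inl (u : {u : V // u ≠ v}) : proj v (.inl u) = u := rfl

@[simp] lemma proj_inr (i : Fin 2) : proj v (.inr i) = v := rfl

lemma eq_inl_of_proj_eq {w : {u : V // u ≠ v} ⊕ Fin 2} {u : V} (h : proj v w = u) (hu : u ≠ v) :
    w = .inl ⟨u, hu⟩ := by
  cases w with
  | inl u' => exact congrArg Sum.inl (Subtype.ext h)
  | inr _ => exact absurd h.symm hu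

end Proj

variable {V : Type*} [DecidableEq V] {v : V}

def copy (v : V) (i : Fin 2) (u : V) : {u : V // u ≠ v} ⊕ Fin 2 :=
  if h : u = v then .inr i else .inl ⟨u, h⟩

@[simp] lemma copy_self (i : Fin 2) : copy v i v = .inr i := dif_pos rfl

lemma copy_of_ne {u : V} (i : Fin 2) (hu : u ≠ v) : copy v i u = .inl ⟨u, hu⟩ :=
  dif_neg hu

@[simp] lemma proj_copy (i : Fin 2) (u : V) : proj v (copy v i u) = u := by
  by_cases h : u = v
  · simp [h]
  · simp [copy_of_ne i h]

lemma copy_injective (i : Fin 2) : Function.Injective (copy v i) :=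
  Function.LeftInverse.injective (g := proj v) (proj_copy i)

lemma inr_zero_notMem_image_copy_one (L : Finset V) :
    (.inr 0 : {u : V // u ≠ v} ⊕ Fin 2) ∉ L.image (copy v 1) := by
  simp only [Finset.mem_image, not_exists, not_and]
  intro u _ h
  by_cases huv : u = v
  · simp [huv] at h
  · simp [copy_of_ne 1 huv] at h

lemma image_copy_of_notMem {L : Finset V} (hv : v ∉ L) :
    L.image (copy v 0) = L.image (copy v 1) :=
  Finset.image_congr fun u hu => by
    rw [copy_of_ne 0 (ne_of_mem_of_not_mem hu hv), copy_of_ne 1 (ne_of_mem_of_not_mem hu hv)]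

lemma image_proj_image_copy (i : Fin 2) (L : Finset V) :
    (L.image (copy v i)).image (proj v) = L := by
  simp [Finset.image_image, Function.comp_def]

lemma image_copy_subset {i : Fin 2} {L : Finset V} {B : Finset ({u : V // u ≠ v} ⊕ Fin 2)}
    (hL : L ⊆ B.image (proj v)) (hi : v ∈ L → .inr i ∈ B) : L.image (copy v i) ⊆ B := by
  refine Finset.image_subset_iff.mpr fun u hu => ?_
  by_cases huv : u = v
  · subst huv
    simpa using hi hu
  · obtain ⟨w, hw, rfl⟩ := Finset.mem_image.mp (hL hu)
    rwa [copy_of_ne i huv, ← eq_inl_of_proj_eq rfl huv]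

lemma subset_image_proj_iff {L : Finset V} {B : Finset ({u : V // u ≠ v} ⊕ Fin 2)} :
    L ⊆ B.image (proj v) ↔ L.image (copy v 0) ⊆ B ∨ L.image (copy v 1) ⊆ B := by
  refine ⟨fun hL => ?_, ?_⟩
  · by_cases h0 : .inr 0 ∈ B
    · exact .inl (image_copy_subset hL fun _ => h0)
    refine .inr (image_copy_subset hL fun hv => ?_)
    obtain ⟨w, hw, hwv⟩ := Finset.mem_image.mp (hL hv)
    cases w with
    | inl u => exact absurd hwv u.2
    | inr j =>
      fin_cases j
      · exact absurd hw h0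
      · exact hw
  · rintro (h | h) <;>
    exact (image_proj_image_copy _ L).symm.trans_subset (Finset.image_subset_image h)

variable [Fintype V]

def preimage (v : V) (A : Finset V) : Finset ({u : V // u ≠ v} ⊕ Fin 2) :=
  Finset.univ.filter fun w => proj v w ∈ A

lemma mem_preimage {A : Finset V} {w : {u : V // u ≠ v} ⊕ Fin 2} :
    w ∈ preimage v A ↔ proj v w ∈ A := by
  simp [preimage]

lemma subset_preimage_iff {A : Finset V} {B : Finset ({u : V // u ≠ v} ⊕ Fin 2)} :
    B ⊆ preimage v A ↔ B.image (proj v) ⊆ A := by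
  rw [Finset.image_subset_iff]
  simp only [Finset.subset_iff, mem_preimage]

lemma image_copy_one_subset_erase (A : Finset V) :
    A.image (copy v 1) ⊆ (preimage v A).erase (.inr 0) :=
  fun _ hw => Finset.mem_erase.mpr
    ⟨ne_of_mem_of_not_mem hw (inr_zero_notMem_image_copy_one A),
      subset_preimage_iff.mpr (image_proj_image_copy 1 A).subset hw⟩

lemma image_proj_erase_inr_zero (A : Finset V) :
    ((preimage v A).erase (.inr 0)).image (proj v) = A := by
  refine subset_antisymm ?_ ?_
  · exact subset_preimage_iff.mp (Finset.erase_subset _ _)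
  · calc A = (A.image (copy v 1)).image (proj v) := (image_proj_image_copy 1 A).symm
      _ ⊆ _ := Finset.image_subset_image (image_copy_one_subset_erase A)

lemma image_proj_preimage (A : Finset V) : (preimage v A).image (proj v) = A :=
  subset_antisymm (subset_preimage_iff.mp subset_rfl)
    ((image_proj_erase_inr_zero A).symm.trans_subset
      (Finset.image_subset_image (Finset.erase_subset _ _)))

lemma mem_splitComplex {K : Finset (Finset V)} {B : Finset ({u : V // u ≠ v} ⊕ Fin 2)} :
    B ∈ splitComplex K v ↔ B.image (proj v) ∈ K := by
  simp [splitComplex, proj]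

lemma splitComplex_filter_not_subset (K : Finset (Finset V)) (L : Finset V) :
    splitComplex (K.filter fun A => ¬ L ⊆ A) v =
      ((splitComplex K v).filter fun B => ¬ L.image (copy v 0) ⊆ B).filter
        fun B => ¬ L.image (copy v 1) ⊆ B := by
  ext B
  simp only [Finset.mem_filter, mem_splitComplex, subset_image_proj_iff]
  tauto

@[simp] lemma splitComplex_empty : splitComplex (∅ : Finset (Finset V)) v = ∅ := by
  ext B
  simp [mem_splitComplex]

variable {d : ℕ} {K : Finset (Finset V)} {L M : Finset V}

lemma subset_preimage_of_image_copy_subset {i : Fin 2} (hmax : ∀ A ∈ K, L ⊆ A → A ⊆ M)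
    {B : Finset ({u : V // u ≠ v} ⊕ Fin 2)} (hB : B ∈ splitComplex K v)
    (hLB : L.image (copy v i) ⊆ B) : B ⊆ preimage v M := by
  refine subset_preimage_iff.mpr (hmax _ (mem_splitComplex.mp hB) ?_)
  exact subset_image_proj_iff.mpr (by fin_cases i <;> [left; right] <;> exact hLB)

lemma elemCollapse_image_copy (i : Fin 2) (hL : L ∈ K) (hM : M ∈ K) (hcard : L.card ≤ d)
    (hmax : ∀ A ∈ K, L ⊆ A → A ⊆ M) :
    ElemCollapse d (splitComplex K v)
      ((splitComplex K v).filter fun B => ¬ L.image (copy v i) ⊆ B) := by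
  refine ⟨L.image (copy v i), preimage v M, ?_, ?_, ?_,
    fun B hB hLB => subset_preimage_of_image_copy_subset hmax hB hLB, rfl⟩
  · rwa [mem_splitComplex, image_proj_image_copy]
  · rwa [mem_splitComplex, image_proj_preimage]
  · rwa [Finset.card_image_of_injective _ (copy_injective i)]

lemma elemCollapse_image_copy_one (hv : v ∈ L) (hL : L ∈ K) (hM : M ∈ K) (hcard : L.card ≤ d)
    (hmax : ∀ A ∈ K, L ⊆ A → A ⊆ M) :
    ElemCollapse d ((splitComplex K v).filter fun B => ¬ L.image (copy v 0) ⊆ B)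
      (((splitComplex K v).filter fun B => ¬ L.image (copy v 0) ⊆ B).filter
        fun B => ¬ L.image (copy v 1) ⊆ B) := by
  have hcopy0 : .inr 0 ∈ L.image (copy v 0) := Finset.mem_image.mpr ⟨v, hv, copy_self 0⟩
  have hcopies : L.image (copy v 0) ⊆ insert (.inr 0) (L.image (copy v 1)) := by
    refine Finset.image_subset_iff.mpr fun u hu => ?_
    by_cases huv : u = v
    · simp [huv]
    · exact Finset.mem_insert_of_mem (Finset.mem_image.mpr ⟨u, hu, by simp [copy_of_ne _ huv]⟩)
  refine ⟨L.image (copy v 1), (preimage v M).erase (.inr 0), ?_, ?_, ?_, fun B hB hLB => ?_, rfl⟩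
  · refine Finset.mem_filter.mpr ⟨?_, fun h => inr_zero_notMem_image_copy_one L (h hcopy0)⟩
    rwa [mem_splitComplex, image_proj_image_copy]
  · refine Finset.mem_filter.mpr ⟨?_, fun h => Finset.notMem_erase _ _ (h hcopy0)⟩
    rwa [mem_splitComplex, image_proj_erase_inr_zero]
  · rwa [Finset.card_image_of_injective _ (copy_injective 1)]
  · rw [Finset.mem_filter] at hB
    have h0 : .inr 0 ∉ B := fun h0 => hB.2 (hcopies.trans (Finset.insert_subset h0 hLB))
    exact fun w hw => Finset.mem_erase.mpr
      ⟨ne_of_mem_of_not_mem hw h0, subset_preimage_of_image_copy_subset hmax hB.1 hLB hw⟩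

lemma _root_.ElemCollapse.splitComplex {K K' : Finset (Finset V)} (h : ElemCollapse d K K') :
    Relation.ReflTransGen (ElemCollapse d) (splitComplex K v) (splitComplex K' v) := by
  obtain ⟨L, M, hL, hM, hcard, hmax, rfl⟩ := h
  rw [splitComplex_filter_not_subset]
  by_cases hv : v ∈ L
  · exact .head (elemCollapse_image_copy 0 hL hM hcard hmax)
      (.single (elemCollapse_image_copy_one hv hL hM hcard hmax))
  · rw [← image_copy_of_notMem hv, Finset.filter_filter]
    simp_rw [and_self]
    exact .single (elemCollapse_image_copy 0 hL hM hcard hmax)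

end SplitComplex

theorem splitComplex_collapsible_general
    {V : Type} [Fintype V] [DecidableEq V] (K : Finset (Finset V))
    (v : V) (d : ℕ) (hcoll : Collapsible d K) :
    Collapsible d (splitComplex K v) := by
  rw [Collapsible, ← SplitComplex.splitComplex_empty (v := v)]
  exact Relation.ReflTransGen.lift' (fun K => splitComplex K v)
    (fun _ _ (h : ElemCollapse d _ _) => h.splitComplex) _ _ hcoll

/-- **Vertex splitting preserves `d`-collapsibility** (key step in the proof of
Lemma 3.4(ii)). -/
theorem splitComplex_collapsible
    {V : Type} [Fintype V] [DecidableEq V] (K : Finset (Finset V)) (hK : IsComplex K)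
    (v : V) (d : ℕ) (hd : 1 ≤ d) (hcoll : Collapsible d K) :
    Collapsible d (splitComplex K v) :=
  splitComplex_collapsible_general K v d hcoll
end

section
/- (Tightness of Theorem 3.1.) Let c, d ≥ 1, let k = (k_1,…,k_c) be a vector of non-negative integers with k_1 + ⋯ + k_c ≥ d + 1, let β = (β_1,…,β_c) ∈ (0,1]^c, and let α' be a real number with 0 ≤ α' < α_k(d,β). Then there exists a d-representable simplicial complex K with vertex partition N = N_1 ⊔ ⋯ ⊔ N_c (each N_i nonempty, n_i := |N_i|) such that K contains at least α'·|binom(N,k)| k-colorful faces, yet dim K[N_i] < β_i·n_i − 1 for every i ∈ {1,…,c}. -/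
open scoped BigOperators

/-- The quantity `α_k(d, β) = Σ_{ℓ ∈ L_k(d)} Π_i C(k i, ℓ i) (1 - β i)^(ℓ i) (β i)^(k i - ℓ i)`,
where `L_k(d)` is the set of vectors `ℓ` with `ℓ i ≤ k i` for all `i` and `Σ ℓ i ≤ d`
(encoded by letting `ℓ i` range over `Fin (k i + 1)`). -/
noncomputable def alphaK (c d : ℕ) (k : Fin c → ℕ) (β : Fin c → ℝ) : ℝ :=
  ∑ ℓ ∈ Finset.univ.filter (fun ℓ : ∀ i : Fin c, Fin (k i + 1) => (∑ i, (ℓ i : ℕ)) ≤ d),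
    ∏ i, (Nat.choose (k i) (ℓ i) : ℝ) * (1 - β i) ^ ((ℓ i : ℕ)) * (β i) ^ (k i - (ℓ i : ℕ))

section Helpers
open Filter Finset Topology in
lemma choose_div_pow_tendsto (j : ℕ) (m : ℕ → ℕ) (γ : ℝ)
    (hm : Tendsto (fun n => (m n : ℝ) / (n : ℝ)) atTop (𝓝 γ))
    (hmj : ∀ᶠ n in atTop, j ≤ m n) :
    Tendsto (fun n => ((m n).choose j : ℝ) / (n : ℝ) ^ j)
      atTop (𝓝 (γ ^ j / (j.factorial : ℝ))) := by
  have key : ∀ᶠ n in atTop, ((m n).choose j : ℝ) / (n : ℝ) ^ j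
      = (∏ r ∈ range j, ((m n : ℝ) - r) / n) / (j.factorial : ℝ) := by
    filter_upwards [hmj, eventually_ge_atTop 1] with n hjm hn1
    have hn0 : (n : ℝ) ≠ 0 := by positivity
    have hdesc : ((m n).descFactorial j : ℝ) = ∏ r ∈ range j, ((m n : ℝ) - r) := by
      rw [Nat.descFactorial_eq_prod_range, Nat.cast_prod]
      refine Finset.prod_congr rfl fun r hr => ?_
      have : r ≤ m n := le_trans (Nat.le_of_lt_succ (Nat.lt_succ_of_lt (mem_range.1 hr))) hjm
      exact Nat.cast_sub this
    have hch : ((m n).choose j : ℝ) = ((m n).descFactorial j : ℝ) / (j.factorial : ℝ) := by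
      rw [Nat.descFactorial_eq_factorial_mul_choose, Nat.cast_mul]
      field_simp
    rw [hch, hdesc, Finset.prod_div_distrib, Finset.prod_const, Finset.card_range]
    ring
  refine Tendsto.congr' (key.mono fun n h => h.symm) ?_
  have hprod : Tendsto (fun n => ∏ r ∈ range j, ((m n : ℝ) - r) / n) atTop (𝓝 (γ ^ j)) := by
    have : (γ:ℝ) ^ j = ∏ r ∈ range j, γ := by simp
    rw [this]
    refine tendsto_finset_prod _ fun r _ => ?_
    have : Tendsto (fun n => (m n : ℝ) / n - (r : ℝ) / n) atTop (𝓝 (γ - 0)) :=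
      hm.sub (tendsto_const_nhds.div_atTop tendsto_natCast_atTop_atTop)
    simpa [sub_div] using this
  simpa using hprod.div_const _


open Filter Finset Topology in
lemma exists_good_n (c d : ℕ) (k : Fin c → ℕ) (β : Fin c → ℝ)
    (hβ : ∀ i, 0 < β i ∧ β i ≤ 1) (α' : ℝ) (hα' : α' < alphaK c d k β) :
    ∃ n : ℕ, 1 ≤ n ∧ (∀ i, d + 2 ≤ ⌈β i * n⌉₊) ∧
      (∀ i, k i ≤ ⌈β i * n⌉₊ - (d+1)) ∧
      α' * ∏ i, ((n.choose (k i)) : ℝ) ≤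
        ∑ ℓ ∈ Finset.univ.filter
            (fun ℓ : ∀ i : Fin c, Fin (k i + 1) => (∑ i, (ℓ i : ℕ)) ≤ d),
          ∏ i, (((n - (⌈β i * n⌉₊ - (d+1))).choose ((ℓ i : ℕ)) : ℝ) *
            (((⌈β i * n⌉₊ - (d+1)).choose (k i - (ℓ i : ℕ))) : ℝ)) := by
  classical
  set L : Finset (∀ i : Fin c, Fin (k i + 1)) :=
    Finset.univ.filter (fun ℓ => (∑ i, (ℓ i : ℕ)) ≤ d) with hL
  set g : ℕ → Fin c → ℕ := fun n i => ⌈β i * n⌉₊ - (d+1) with hgdef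
  set b : ℕ → Fin c → ℕ := fun n i => n - g n i with hbdef
  have hceil_le : ∀ (n : ℕ) (i : Fin c), ⌈β i * n⌉₊ ≤ n := by
    intro n i
    refine Nat.ceil_le.2 ?_
    have h0 : (0:ℝ) ≤ (n:ℝ) := Nat.cast_nonneg n
    nlinarith [(hβ i).1, (hβ i).2]
  have hg_le : ∀ (n : ℕ) (i : Fin c), g n i ≤ n := fun n i =>
    le_trans (Nat.sub_le _ _) (hceil_le n i)
  have hceil : ∀ i, Filter.Tendsto (fun n : ℕ => (⌈β i * n⌉₊ : ℝ) / n)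
      Filter.atTop (𝓝 (β i)) := by
    intro i
    have hup : Filter.Tendsto (fun n : ℕ => β i + 1 / (n:ℝ)) Filter.atTop (𝓝 (β i)) := by
      simpa using (tendsto_const_nhds (x := β i)).add tendsto_one_div_atTop_nhds_zero_nat
    refine tendsto_of_tendsto_of_tendsto_of_le_of_le' tendsto_const_nhds hup ?_ ?_
    · filter_upwards [Filter.eventually_ge_atTop 1] with n hn
      have hn0 : (0:ℝ) < n := by exact_mod_cast hn
      rw [le_div_iff₀ hn0]
      exact Nat.le_ceil _
    · filter_upwards [Filter.eventually_ge_atTop 1] with n hn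
      have hn0 : (0:ℝ) < n := by exact_mod_cast hn
      rw [div_le_iff₀ hn0]
      have h2 : (β i + 1/(n:ℝ)) * n = β i * n + 1 := by field_simp
      rw [h2]
      have : (0:ℝ) ≤ β i * n := mul_nonneg (hβ i).1.le (Nat.cast_nonneg n)
      exact (Nat.ceil_lt_add_one this).le
  have hE1 : ∀ i, ∀ᶠ n : ℕ in Filter.atTop, d + 2 ≤ ⌈β i * n⌉₊ := by
    intro i
    have hb : Filter.Tendsto (fun n : ℕ => β i * n) Filter.atTop Filter.atTop :=
      Filter.Tendsto.const_mul_atTop (hβ i).1 tendsto_natCast_atTop_atTop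
    filter_upwards [hb.eventually_ge_atTop ((d:ℝ) + 2)] with n hn
    have : ((d:ℝ) + 2) ≤ ⌈β i * n⌉₊ := le_trans hn (Nat.le_ceil _)
    exact_mod_cast this
  have hgcast : ∀ i, ∀ᶠ n : ℕ in Filter.atTop,
      ((g n i : ℝ)) = (⌈β i * n⌉₊ : ℝ) - ((d:ℝ)+1) := by
    intro i
    filter_upwards [hE1 i] with n hn
    have h1 : (d+1) ≤ ⌈β i * n⌉₊ := by omega
    rw [hgdef]
    push_cast [Nat.cast_sub h1]
    ring
  have hgt : ∀ i, Filter.Tendsto (fun n : ℕ => (g n i : ℝ)/n) Filter.atTop (𝓝 (β i)) := by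
    intro i
    have h1 : Filter.Tendsto (fun n : ℕ => (⌈β i * n⌉₊:ℝ)/n - ((d:ℝ)+1)/n)
        Filter.atTop (𝓝 (β i - 0)) :=
      (hceil i).sub (tendsto_const_nhds.div_atTop tendsto_natCast_atTop_atTop)
    rw [sub_zero] at h1
    refine Filter.Tendsto.congr' ?_ h1
    filter_upwards [hgcast i] with n hn
    rw [← sub_div, ← hn]
  have hbt : ∀ i, Filter.Tendsto (fun n : ℕ => (b n i : ℝ)/n) Filter.atTop (𝓝 (1 - β i)) := by
    intro i
    have h1 : Filter.Tendsto (fun n : ℕ => (n:ℝ)/n - (g n i:ℝ)/n)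
        Filter.atTop (𝓝 (1 - β i)) := by
      refine Filter.Tendsto.sub ?_ (hgt i)
      refine Filter.Tendsto.congr' ?_ (tendsto_const_nhds (x := (1:ℝ)))
      filter_upwards [Filter.eventually_ge_atTop 1] with n hn
      have hn0 : (n:ℝ) ≠ 0 := Nat.cast_ne_zero.2 (by omega)
      rw [div_self hn0]
    refine Filter.Tendsto.congr' ?_ h1
    filter_upwards with n
    rw [hbdef]
    rw [Nat.cast_sub (hg_le n i), sub_div]
  have hbev : ∀ i, ∀ᶠ n : ℕ in Filter.atTop, d + 1 ≤ b n i := by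
    intro i
    filter_upwards [hE1 i] with n hn
    have h2 := hceil_le n i
    simp only [hbdef, hgdef]
    omega
  have hgev : ∀ i (m : ℕ), ∀ᶠ n : ℕ in Filter.atTop, m ≤ g n i := by
    intro i m
    have hgtop : Filter.Tendsto (fun n : ℕ => (g n i : ℝ)) Filter.atTop Filter.atTop := by
      have h1 : Filter.Tendsto (fun n : ℕ => ((g n i:ℝ)/n) * n) Filter.atTop Filter.atTop :=
        Filter.Tendsto.pos_mul_atTop (hβ i).1 (hgt i) tendsto_natCast_atTop_atTop
      refine Filter.Tendsto.congr' ?_ h1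
      filter_upwards [Filter.eventually_ge_atTop 1] with n hn
      have hn0 : (n:ℝ) ≠ 0 := Nat.cast_ne_zero.2 (by omega)
      field_simp
    filter_upwards [hgtop.eventually_ge_atTop (m:ℝ)] with n hn
    exact_mod_cast hn
  -- limits of the two normalized quantities
  set K0 : ℕ := ∑ i, k i with hK0
  have hfacpos : (0:ℝ) < ∏ i, (1 / ((k i).factorial : ℝ)) := by
    refine Finset.prod_pos fun i _ => ?_
    have := (k i).factorial_pos
    positivity
  have hLHS : Filter.Tendsto (fun n : ℕ => α' * ∏ i, ((n.choose (k i)):ℝ)/(n:ℝ)^(k i))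
      Filter.atTop (𝓝 (α' * ∏ i, (1 / ((k i).factorial : ℝ)))) := by
    refine Filter.Tendsto.const_mul _ ?_
    have h1 : ∀ i : Fin c, Filter.Tendsto (fun n : ℕ => ((n.choose (k i)):ℝ)/(n:ℝ)^(k i))
        Filter.atTop (𝓝 ((1:ℝ)^(k i) / ((k i).factorial : ℝ))) := by
      intro i
      refine choose_div_pow_tendsto (k i) id 1 ?_ ?_
      · refine Filter.Tendsto.congr' ?_ (tendsto_const_nhds (x := (1:ℝ)))
        filter_upwards [Filter.eventually_ge_atTop 1] with n hn
        have hn0 : (n:ℝ) ≠ 0 := Nat.cast_ne_zero.2 (by omega)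
        simp [div_self hn0]
      · exact Filter.eventually_ge_atTop (k i)
    have := tendsto_finset_prod (Finset.univ : Finset (Fin c))
      (fun i _ => h1 i)
    simpa using this
  have hRHS : Filter.Tendsto (fun n : ℕ => ∑ ℓ ∈ L, ∏ i,
      (((b n i).choose ((ℓ i : ℕ))):ℝ)/(n:ℝ)^((ℓ i : ℕ)) *
        ((((g n i).choose (k i - (ℓ i : ℕ)))):ℝ)/(n:ℝ)^(k i - (ℓ i : ℕ)))
      Filter.atTop (𝓝 ((∏ i, (1 / ((k i).factorial : ℝ))) * alphaK c d k β)) := by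
    have hval : (∏ i, (1 / ((k i).factorial : ℝ))) * alphaK c d k β
        = ∑ ℓ ∈ L, ∏ i, ((1 - β i)^((ℓ i : ℕ)) / (((ℓ i : ℕ)).factorial : ℝ)) *
            ((β i)^(k i - (ℓ i : ℕ)) / ((k i - (ℓ i : ℕ)).factorial : ℝ)) := by
      rw [alphaK, Finset.mul_sum]
      refine Finset.sum_congr rfl fun ℓ hℓ => ?_
      rw [← Finset.prod_mul_distrib]
      refine Finset.prod_congr rfl fun i _ => ?_
      have hle : (ℓ i : ℕ) ≤ k i := Fin.is_le _
      have hfac : (((k i).choose (ℓ i)) : ℝ) * ((ℓ i : ℕ).factorial : ℝ) *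
          (((k i - (ℓ i : ℕ)).factorial : ℝ)) = ((k i).factorial : ℝ) := by
        exact_mod_cast congrArg (Nat.cast (R := ℝ))
          (Nat.choose_mul_factorial_mul_factorial hle)
      have h1 : ((ℓ i : ℕ).factorial : ℝ) ≠ 0 := by
        exact_mod_cast (Nat.factorial_pos _).ne'
      have h2 : ((k i - (ℓ i : ℕ)).factorial : ℝ) ≠ 0 := by
        exact_mod_cast (Nat.factorial_pos _).ne'
      have h3 : ((k i).factorial : ℝ) ≠ 0 := by
        exact_mod_cast (Nat.factorial_pos _).ne'
      rw [div_mul_div_comm, one_div, inv_mul_eq_div, div_eq_div_iff h3 (mul_ne_zero h1 h2)]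
      linear_combination ((1 - β i) ^ ((ℓ i : ℕ)) * (β i) ^ (k i - (ℓ i : ℕ))) * hfac
    rw [hval]
    refine tendsto_finset_sum L fun ℓ hℓ => ?_
    have hsum_le : ∀ i, (ℓ i : ℕ) ≤ d := by
      intro i
      have hmem := (Finset.mem_filter.1 hℓ).2
      exact le_trans (Finset.single_le_sum (f := fun i => (ℓ i : ℕ))
        (fun i _ => Nat.zero_le _) (Finset.mem_univ i)) hmem
    refine tendsto_finset_prod _ fun i _ => ?_
    have hb1 : Filter.Tendsto (fun n : ℕ => (((b n i).choose ((ℓ i:ℕ))):ℝ)/(n:ℝ)^((ℓ i:ℕ)))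
        Filter.atTop (𝓝 ((1 - β i)^((ℓ i:ℕ)) / (((ℓ i:ℕ)).factorial : ℝ))) := by
      refine choose_div_pow_tendsto _ _ _ (hbt i) ?_
      filter_upwards [hbev i] with n hn
      have := hsum_le i
      omega
    have hg1 : Filter.Tendsto
        (fun n : ℕ => (((g n i).choose (k i - (ℓ i:ℕ))):ℝ)/(n:ℝ)^(k i - (ℓ i:ℕ)))
        Filter.atTop (𝓝 ((β i)^(k i - (ℓ i:ℕ)) / ((k i - (ℓ i:ℕ)).factorial : ℝ))) := by
      refine choose_div_pow_tendsto _ _ _ (hgt i) (hgev i _)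
    exact Filter.Tendsto.congr (fun n => by ring) (hb1.mul hg1)
  have hlt : α' * ∏ i, (1 / ((k i).factorial : ℝ))
      < (∏ i, (1 / ((k i).factorial : ℝ))) * alphaK c d k β := by
    rw [mul_comm (∏ i, (1 / ((k i).factorial : ℝ)))]
    exact mul_lt_mul_of_pos_right hα' hfacpos
  have hev := hLHS.eventually_lt hRHS hlt
  -- combine all eventual statements
  have hall : ∀ᶠ n : ℕ in Filter.atTop, (∀ i, d + 2 ≤ ⌈β i * n⌉₊) ∧
      (∀ i, k i ≤ g n i) ∧ 1 ≤ n ∧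
      (α' * ∏ i, ((n.choose (k i)):ℝ)/(n:ℝ)^(k i) <
        ∑ ℓ ∈ L, ∏ i, (((b n i).choose ((ℓ i : ℕ))):ℝ)/(n:ℝ)^((ℓ i : ℕ)) *
          ((((g n i).choose (k i - (ℓ i : ℕ)))):ℝ)/(n:ℝ)^(k i - (ℓ i : ℕ))) := by
    refine ((Filter.eventually_all.2 hE1).and ((Filter.eventually_all.2
      (fun i => hgev i (k i))).and ((Filter.eventually_ge_atTop 1).and hev))).mono ?_
    tauto
  obtain ⟨n, hn⟩ := hall.exists
  obtain ⟨h1, h2, h3, h4⟩ := hn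
  refine ⟨n, h3, h1, h2, ?_⟩
  -- unnormalize
  have hn0 : (0:ℝ) < (n:ℝ)^K0 := by
    have : (0:ℝ) < (n:ℝ) := by exact_mod_cast h3
    positivity
  have hL1 : α' * ∏ i, ((n.choose (k i)):ℝ)/(n:ℝ)^(k i)
      = (α' * ∏ i, ((n.choose (k i)):ℝ)) / (n:ℝ)^K0 := by
    rw [Finset.prod_div_distrib, Finset.prod_pow_eq_pow_sum, ← hK0, mul_div_assoc]
  have hR1 : (∑ ℓ ∈ L, ∏ i, (((b n i).choose ((ℓ i : ℕ))):ℝ)/(n:ℝ)^((ℓ i : ℕ)) *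
        ((((g n i).choose (k i - (ℓ i : ℕ)))):ℝ)/(n:ℝ)^(k i - (ℓ i : ℕ)))
      = (∑ ℓ ∈ L, ∏ i, (((b n i).choose ((ℓ i : ℕ))):ℝ) *
          (((g n i).choose (k i - (ℓ i : ℕ))):ℝ)) / (n:ℝ)^K0 := by
    rw [Finset.sum_div]
    refine Finset.sum_congr rfl fun ℓ hℓ => ?_
    have hsplit : ∀ i : Fin c, (((b n i).choose ((ℓ i : ℕ))):ℝ)/(n:ℝ)^((ℓ i : ℕ)) *
        ((((g n i).choose (k i - (ℓ i : ℕ)))):ℝ)/(n:ℝ)^(k i - (ℓ i : ℕ))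
        = ((((b n i).choose ((ℓ i : ℕ))):ℝ) * (((g n i).choose (k i - (ℓ i : ℕ))):ℝ))
            / (n:ℝ)^(k i) := by
      intro i
      have hle : (ℓ i : ℕ) ≤ k i := Fin.is_le _
      rw [div_mul_eq_mul_div, div_div, ← pow_add, Nat.add_sub_cancel' hle]
    rw [Finset.prod_congr rfl (fun i _ => hsplit i), Finset.prod_div_distrib,
      Finset.prod_pow_eq_pow_sum, ← hK0]
  rw [hL1, hR1] at h4
  have h5 := mul_le_mul_of_nonneg_right (le_of_lt h4) (le_of_lt hn0)
  rw [div_mul_cancel₀ _ hn0.ne', div_mul_cancel₀ _ hn0.ne'] at h5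
  exact h5

lemma card_filter_val_lt {n m : ℕ} (h : m ≤ n) :
    ((Finset.univ : Finset (Fin n)).filter fun j => j.val < m).card = m := by
  have := Finset.card_bij'
    (s := (Finset.univ : Finset (Fin n)).filter fun j => j.val < m)
    (t := (Finset.univ : Finset (Fin m)))
    (i := fun j hj => (⟨j.val, (Finset.mem_filter.1 hj).2⟩ : Fin m))
    (j := fun q _ => Fin.castLE h q)
    (hi := fun _ _ => Finset.mem_univ _)
    (hj := fun q _ => Finset.mem_filter.2 ⟨Finset.mem_univ _, q.2⟩)
    (left_inv := fun j hj => by ext; rfl)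
    (right_inv := fun q hq => by ext; rfl)
  rw [this, Finset.card_univ, Fintype.card_fin]

lemma card_filter_fst_and {c n : ℕ} (e : Fin (c*n) ≃ Fin c × Fin n) (i : Fin c)
    (r : Fin n → Prop) [DecidablePred r] :
    (Finset.univ.filter fun v => (e v).1 = i ∧ r (e v).2).card
      = (Finset.univ.filter fun j : Fin n => r j).card := by
  refine Finset.card_bij' (i := fun v _ => (e v).2) (j := fun q _ => e.symm (i, q)) ?_ ?_ ?_ ?_
  · intro v hv; rw [Finset.mem_filter] at hv ⊢; exact ⟨Finset.mem_univ _, hv.2.2⟩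
  · intro q hq; rw [Finset.mem_filter] at hq ⊢
    refine ⟨Finset.mem_univ _, by simp, by simp [hq.2]⟩
  · intro v hv
    rw [Finset.mem_filter] at hv
    have h1 : (e v) = (i, (e v).2) := Prod.ext hv.2.1 rfl
    show e.symm (i, (e v).2) = v
    rw [← h1, Equiv.symm_apply_apply]
  · intro q hq; simp


open Matrix in
lemma hyperplanes_exist (d B : ℕ) (hd : 1 ≤ d) (hB : d ≤ B) :
    ∃ H : Fin B → Set (EuclideanSpace ℝ (Fin d)), (∀ j, Convex ℝ (H j)) ∧
      ∀ S : Finset (Fin B), (⋂ j ∈ S, H j).Nonempty ↔ S.card ≤ d := by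
  set t : Fin B → ℝ := fun j => (j : ℕ) + 1 with ht
  have htinj : Function.Injective t := by
    intro a b hab
    have : ((a : ℕ) : ℝ) = ((b : ℕ) : ℝ) := by simpa [ht] using hab
    exact Fin.ext (Nat.cast_injective this)
  have htpos : ∀ j, t j ≠ 0 := by
    intro j; have : (0:ℝ) ≤ ((j:ℕ):ℝ) := Nat.cast_nonneg _
    simp only [ht]; intro h; linarith [h]
  refine ⟨fun j => {x | ∑ m : Fin d, t j ^ ((m : ℕ) + 1) * x m = 1}, ?_, ?_⟩
  · intro j x hx y hy a b ha hb hab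
    simp only [Set.mem_setOf_eq] at *
    have hcoord : ∀ m : Fin d, (a • x + b • y) m = a * x m + b * y m := fun m => rfl
    simp only [hcoord, mul_add, Finset.sum_add_distrib]
    have e1 : ∑ m : Fin d, t j ^ ((m:ℕ)+1) * (a * x m) = a * ∑ m : Fin d, t j ^ ((m:ℕ)+1) * x m := by
      rw [Finset.mul_sum]; exact Finset.sum_congr rfl fun m _ => by ring
    have e2 : ∑ m : Fin d, t j ^ ((m:ℕ)+1) * (b * y m) = b * ∑ m : Fin d, t j ^ ((m:ℕ)+1) * y m := by
      rw [Finset.mul_sum]; exact Finset.sum_congr rfl fun m _ => by ring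
    rw [e1, e2, hx, hy]; linarith
  · intro S
    constructor
    · -- nonempty → card ≤ d
      rintro ⟨x, hx⟩
      by_contra hcard
      push_neg at hcard
      obtain ⟨T, hTS, hT⟩ := Finset.exists_subset_card_eq (n := d+1) (s := S) hcard
      have eT : Fin (d+1) ≃ {y // y ∈ T} := (T.equivFinOfCardEq hT).symm
      set W : Matrix (Fin (d+1)) (Fin (d+1)) ℝ := Matrix.vandermonde (fun p => t (eT p)) with hW
      have hdet : W.det ≠ 0 := by
        rw [hW, Matrix.det_vandermonde_ne_zero_iff]
        exact htinj.comp (Subtype.val_injective.comp eT.injective)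
      set y : Fin (d+1) → ℝ := Fin.cons (-1) (fun m => x m) with hy
      have hWy : W.mulVec y = 0 := by
        funext p
        have hmem : (eT p : Fin B) ∈ S := hTS (eT p).2
        have hxp := Set.mem_iInter.1 (Set.mem_iInter.1 hx (eT p)) hmem
        simp only [Set.mem_setOf_eq] at hxp
        show ∑ m, W p m * y m = 0
        rw [Fin.sum_univ_succ]
        have h0 : W p 0 * y 0 = -1 := by
          simp [hW, hy, Matrix.vandermonde]
        have hs : ∀ m : Fin d, W p m.succ * y m.succ = t (eT p) ^ ((m:ℕ)+1) * x m := by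
          intro m; simp [hW, hy, Matrix.vandermonde]
        rw [h0]
        rw [Finset.sum_congr rfl (fun m _ => hs m), hxp]
        ring
      have : y = 0 := Matrix.eq_zero_of_mulVec_eq_zero hdet hWy
      have : y 0 = 0 := by rw [this]; rfl
      simp [hy] at this
    · intro hS
      obtain ⟨T, hST, hT⟩ := Finset.exists_superset_card_eq hS (by simpa using hB)
      have eT : Fin d ≃ {y // y ∈ T} := (T.equivFinOfCardEq hT).symm
      set M : Matrix (Fin d) (Fin d) ℝ := Matrix.of fun p m => t (eT p) ^ ((m : ℕ) + 1) with hM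
      have hdet : M.det ≠ 0 := by
        have hMeq : M = Matrix.of fun p m =>
            (fun q : Fin d => t (eT q)) p * (Matrix.vandermonde fun q => t (eT q)) p m := by
          ext p m; simp [hM, Matrix.vandermonde, pow_succ, mul_comm]
        rw [hMeq, Matrix.det_mul_column]
        refine mul_ne_zero (Finset.prod_ne_zero_iff.2 fun p _ => htpos _) ?_
        rw [Matrix.det_vandermonde_ne_zero_iff]
        exact htinj.comp (Subtype.val_injective.comp eT.injective)
      obtain ⟨x, hxM⟩ := (Matrix.mulVec_surjective_iff_isUnit.2
        ((Matrix.isUnit_iff_isUnit_det M).2 (isUnit_iff_ne_zero.2 hdet))) (fun _ => 1)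
      refine ⟨WithLp.toLp 2 x, ?_⟩
      simp only [Set.mem_iInter]
      intro j hj
      have hjT : j ∈ T := hST hj
      rw [Set.mem_setOf_eq]
      have hp := congrFun hxM (eT.symm ⟨j, hjT⟩)
      have : ∑ m, M (eT.symm ⟨j, hjT⟩) m * x m = 1 := hp
      rw [← this]
      refine Finset.sum_congr rfl fun m _ => ?_
      congr 2
      have : (eT (eT.symm ⟨j, hjT⟩) : Fin B) = j := by simp
      rw [this]

end Helpers

/-- **Tightness of Theorem 3.1**. For every `α' < α_k(d, β)` there is a
`d`-representable simplicial complex `K` (on some vertex set `Fin N`, colored with all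
color classes nonempty, realized as the nerve of a family of convex sets in `ℝ^d`)
containing at least `α' · |binom(N, k)|` `k`-colorful faces, yet with
`dim K[N i] < β i · n i - 1` for every `i` (i.e. every face contained in a single
color class `i` has dimension `< β i · n i - 1`). -/
theorem k_colorful_fractional_helly_tight
    (c d : ℕ) (hc : 1 ≤ c) (hd : 1 ≤ d) (k : Fin c → ℕ) (hk : d + 1 ≤ ∑ i, k i)
    (β : Fin c → ℝ) (hβ : ∀ i, 0 < β i ∧ β i ≤ 1)
    (α' : ℝ) (hα'0 : 0 ≤ α') (hα' : α' < alphaK c d k β) :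
    ∃ (N : ℕ) (K : Finset (Finset (Fin N))) (color : Fin N → Fin c),
      IsComplex K ∧
      (∀ i, 1 ≤ (Finset.univ.filter fun v => color v = i).card) ∧
      (∃ F : Fin N → Set (EuclideanSpace ℝ (Fin d)), (∀ v, Convex ℝ (F v)) ∧
        ∀ A : Finset (Fin N), A ∈ K ↔ (⋂ v ∈ A, F v).Nonempty) ∧
      α' * ((Finset.univ.filter fun S : Finset (Fin N) =>
          ∀ i, (S.filter fun v => color v = i).card = k i).card : ℝ) ≤
        ((K.filter fun A => ∀ i, (A.filter fun v => color v = i).card = k i).card : ℝ) ∧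
      ∀ i, ∀ A ∈ K, (∀ v ∈ A, color v = i) →
        (A.card : ℝ) - 1 <
          β i * ((Finset.univ.filter fun v => color v = i).card : ℝ) - 1 := by
  obtain ⟨n, hn1, hE1, hkg, hmain⟩ := exists_good_n c d k β hβ α' hα'
  set g : Fin c → ℕ := fun i => ⌈β i * n⌉₊ - (d+1) with hgdef
  have hceil_le : ∀ i, ⌈β i * n⌉₊ ≤ n := by
    intro i
    refine Nat.ceil_le.2 ?_
    have h0 : (0:ℝ) ≤ (n:ℝ) := Nat.cast_nonneg n
    nlinarith [(hβ i).1, (hβ i).2]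
  have hgsum : ∀ i, g i + (d+1) = ⌈β i * n⌉₊ := by
    intro i; have := hE1 i; simp only [hgdef]; omega
  have hgn : ∀ i, g i + (d+1) ≤ n := fun i => (hgsum i) ▸ hceil_le i
  set pe : Fin (c * n) ≃ Fin c × Fin n := finProdFinEquiv.symm with hpe
  set color : Fin (c * n) → Fin c := fun v => (pe v).1 with hcolor
  set goodP : Fin (c * n) → Prop := fun v => (pe v).2.val < g (color v) with hgoodP
  have hgooddec : DecidablePred goodP := fun v => Nat.decLt _ _
  set K : Finset (Finset (Fin (c * n))) :=
    Finset.univ.filter fun A => (A.filter fun v => ¬ goodP v).card ≤ d with hK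
  -- class cardinalities
  have hgle : ∀ i, g i ≤ n := fun i => by have := hgn i; omega
  have hclassC : ∀ i, (Finset.univ.filter fun v => color v = i).card = n := by
    intro i
    have h1 : (Finset.univ.filter fun v => color v = i)
        = (Finset.univ.filter fun v => (pe v).1 = i ∧ (fun _ : Fin n => True) (pe v).2) := by
      refine Finset.filter_congr fun v _ => ?_
      simp [hcolor]
    rw [h1, card_filter_fst_and pe i (fun _ => True)]
    simp
  have hgoodC : ∀ i, (Finset.univ.filter fun v => color v = i ∧ goodP v).card = g i := by
    intro i
    have h1 : (Finset.univ.filter fun v => color v = i ∧ goodP v)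
        = (Finset.univ.filter fun v => (pe v).1 = i ∧ (fun j : Fin n => j.val < g i) (pe v).2) := by
      refine Finset.filter_congr fun v _ => ?_
      simp only [hgoodP, hcolor]
      constructor
      · rintro ⟨h1, h2⟩; exact ⟨h1, h1 ▸ h2⟩
      · rintro ⟨h1, h2⟩; exact ⟨h1, by rw [h1]; exact h2⟩
    rw [h1, card_filter_fst_and pe i (fun j => j.val < g i), card_filter_val_lt (hgle i)]
  have hbadC : ∀ i, (Finset.univ.filter fun v => color v = i ∧ ¬ goodP v).card = n - g i := by
    intro i
    have h1 : (Finset.univ.filter fun v => color v = i ∧ ¬ goodP v)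
        = (Finset.univ.filter fun v => (pe v).1 = i ∧ (fun j : Fin n => ¬ j.val < g i) (pe v).2) := by
      refine Finset.filter_congr fun v _ => ?_
      simp only [hgoodP, hcolor]
      constructor
      · rintro ⟨h1, h2⟩; exact ⟨h1, by rw [← h1]; exact h2⟩
      · rintro ⟨h1, h2⟩; exact ⟨h1, by rw [h1]; exact h2⟩
    rw [h1, card_filter_fst_and pe i (fun j => ¬ j.val < g i)]
    have hsplit := Finset.card_filter_add_card_filter_not
      (s := (Finset.univ : Finset (Fin n))) (p := fun j => j.val < g i)
    rw [card_filter_val_lt (hgle i)] at hsplit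
    have : (Finset.univ : Finset (Fin n)).card = n := by simp
    omega
  refine ⟨c * n, K, color, ?_, ?_, ?_, ?_, ?_⟩
  · -- IsComplex
    intro A hA B hBA
    simp only [hK, Finset.mem_filter, Finset.mem_univ, true_and] at hA ⊢
    exact le_trans (Finset.card_le_card (Finset.filter_subset_filter _ hBA)) hA
  · -- classes nonempty
    intro i
    rw [hclassC i]; exact hn1
  · -- nerve realization
    set Bads : Finset (Fin (c*n)) := Finset.univ.filter (fun v => ¬ goodP v) with hBads
    have hBd : d + 1 ≤ Bads.card := by
      have hsub : (Finset.univ.filter fun v => color v = ⟨0, hc⟩ ∧ ¬ goodP v) ⊆ Bads := by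
        intro v hv; rw [Finset.mem_filter] at hv ⊢; exact ⟨hv.1, hv.2.2⟩
      have h1 := Finset.card_le_card hsub
      have hb0 := hbadC ⟨0, hc⟩
      have h2 := hgn ⟨0, hc⟩
      omega
    obtain ⟨H, hHconv, hHint⟩ := hyperplanes_exist d Bads.card hd (by omega)
    have hB0 : 0 < Bads.card := by omega
    set idx : Fin (c*n) → Fin Bads.card := fun v =>
      if h : v ∈ Bads then Bads.equivFin ⟨v, h⟩ else ⟨0, hB0⟩ with hidx
    refine ⟨fun v => if goodP v then Set.univ else H (idx v), ?_, ?_⟩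
    · intro v
      show Convex ℝ (if goodP v then Set.univ else H (idx v))
      split_ifs
      · exact convex_univ
      · exact hHconv _
    · intro A
      have hiEq : (⋂ v ∈ A, (if goodP v then Set.univ else H (idx v))) =
          ⋂ j ∈ (A.filter fun v => ¬ goodP v).image idx, H j := by
        ext x
        simp only [Set.mem_iInter, Finset.mem_image, Finset.mem_filter]
        constructor
        · rintro hx j ⟨v, ⟨hvA, hvb⟩, rfl⟩
          have := hx v hvA
          rwa [if_neg hvb] at this
        · intro hx v hvA
          by_cases hgv : goodP v
          · rw [if_pos hgv]; trivial
          · rw [if_neg hgv]; exact hx (idx v) ⟨v, ⟨hvA, hgv⟩, rfl⟩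
      rw [hiEq, hHint]
      have hinj : Set.InjOn idx (A.filter fun v => ¬ goodP v) := by
        intro u hu v hv huv
        simp only [Finset.coe_filter, Set.mem_setOf_eq] at hu hv
        have hub : u ∈ Bads := by rw [hBads, Finset.mem_filter]; exact ⟨Finset.mem_univ _, hu.2⟩
        have hvb : v ∈ Bads := by rw [hBads, Finset.mem_filter]; exact ⟨Finset.mem_univ _, hv.2⟩
        rw [hidx] at huv
        simp only [dif_pos hub, dif_pos hvb] at huv
        have := Bads.equivFin.injective huv
        exact Subtype.ext_iff.1 this
      rw [Finset.card_image_of_injOn hinj]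
      simp only [hK, Finset.mem_filter, Finset.mem_univ, true_and]
  · -- counting
    classical
    set L : Finset (∀ i : Fin c, Fin (k i + 1)) :=
      Finset.univ.filter (fun ℓ : ∀ i : Fin c, Fin (k i + 1) => (∑ i, (ℓ i : ℕ)) ≤ d) with hLdef
    -- upper bound on the number of colorful sets
    set binomS : Finset (Finset (Fin (c*n))) :=
      Finset.univ.filter fun S : Finset (Fin (c*n)) =>
        ∀ i, (S.filter fun v => color v = i).card = k i with hbinomS
    have hbinom : binomS.card ≤ ∏ i, (n.choose (k i)) := by
      set tgt : Fin c → Finset (Finset (Fin (c*n))) := fun i =>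
        ((Finset.univ.filter fun v => color v = i).powersetCard (k i)) with htgt
      have hmem : ∀ S ∈ binomS, ∀ i, (S.filter fun v => color v = i) ∈ tgt i := by
        intro S hS i
        rw [htgt, Finset.mem_powersetCard]
        refine ⟨fun v hv => ?_, (Finset.mem_filter.1 hS).2 i⟩
        rw [Finset.mem_filter] at hv ⊢
        exact ⟨Finset.mem_univ _, hv.2⟩
      have hinj : Function.Injective (fun (S : {S // S ∈ binomS}) =>
          (fun i => (⟨S.1.filter fun v => color v = i, hmem S.1 S.2 i⟩ : {T // T ∈ tgt i}))) := by
        intro S S' h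
        apply Subtype.ext
        apply Finset.ext
        intro v
        have h1 : S.1.filter (fun w => color w = color v)
            = S'.1.filter (fun w => color w = color v) := by
          have := congrFun h (color v)
          exact Subtype.ext_iff.1 this
        constructor
        · intro hv
          have h2 : v ∈ S.1.filter fun w => color w = color v :=
            Finset.mem_filter.2 ⟨hv, rfl⟩
          rw [h1] at h2
          exact (Finset.mem_filter.1 h2).1
        · intro hv
          have h2 : v ∈ S'.1.filter fun w => color w = color v :=
            Finset.mem_filter.2 ⟨hv, rfl⟩
          rw [← h1] at h2
          exact (Finset.mem_filter.1 h2).1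
      have hcard := Fintype.card_le_of_injective _ hinj
      rw [Fintype.card_coe, Fintype.card_pi] at hcard
      simp only [Fintype.card_coe, htgt, Finset.card_powersetCard, hclassC] at hcard
      exact hcard
    -- lower bound on the number of colorful faces
    set face : (∀ i : Fin c, Fin (k i + 1)) → Finset (Finset (Fin (c*n))) := fun ℓ =>
      K.filter fun A => (∀ i, (A.filter fun v => color v = i).card = k i) ∧
        ∀ i, (A.filter fun v => color v = i ∧ ¬ goodP v).card = (ℓ i : ℕ) with hface
    have hdisj : ∀ ℓ ∈ L, ∀ ℓ' ∈ L, ℓ ≠ ℓ' → Disjoint (face ℓ) (face ℓ') := by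
      intro ℓ _ ℓ' _ hne
      rw [Finset.disjoint_left]
      intro A hA hA'
      refine hne (funext fun i => Fin.ext ?_)
      have h1 := (Finset.mem_filter.1 hA).2.2 i
      have h2 := (Finset.mem_filter.1 hA').2.2 i
      rw [← h1, ← h2]
    have hsub : ∀ ℓ ∈ L, face ℓ ⊆
        K.filter fun A => ∀ i, (A.filter fun v => color v = i).card = k i := by
      intro ℓ _ A hA
      rw [Finset.mem_filter] at hA ⊢
      exact ⟨hA.1, hA.2.1⟩
    have hsumle : ∑ ℓ ∈ L, (face ℓ).card ≤
        (K.filter fun A => ∀ i, (A.filter fun v => color v = i).card = k i).card := by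
      rw [← Finset.card_biUnion hdisj]
      exact Finset.card_le_card (Finset.biUnion_subset.2 hsub)
    have hlower : ∀ ℓ ∈ L,
        ∏ i, ((n - g i).choose ((ℓ i : ℕ)) * (g i).choose (k i - (ℓ i : ℕ))) ≤ (face ℓ).card := by
      intro ℓ hℓ
      have hsumd : (∑ i, (ℓ i : ℕ)) ≤ d := (Finset.mem_filter.1 hℓ).2
      set Tb : Fin c → Finset (Finset (Fin (c*n))) := fun i =>
        (Finset.univ.filter fun v => color v = i ∧ ¬ goodP v).powersetCard ((ℓ i : ℕ)) with hTb
      set Tg : Fin c → Finset (Finset (Fin (c*n))) := fun i =>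
        (Finset.univ.filter fun v => color v = i ∧ goodP v).powersetCard (k i - (ℓ i : ℕ)) with hTg
      set As : (∀ i, {T // T ∈ Tb i} × {U // U ∈ Tg i}) → Finset (Fin (c*n)) := fun x =>
        Finset.univ.biUnion fun i => ((x i).1.1 ∪ (x i).2.1) with hAs
      have hTsub : ∀ (x : ∀ i : Fin c, {T // T ∈ Tb i} × {U // U ∈ Tg i}) (i : Fin c) v, v ∈ (x i).1.1 → color v = i ∧ ¬ goodP v := by
        intro x i v hv
        have := (Finset.mem_powersetCard.1 (x i).1.2).1 hv
        exact (Finset.mem_filter.1 this).2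
      have hUsub : ∀ (x : ∀ i : Fin c, {T // T ∈ Tb i} × {U // U ∈ Tg i}) (i : Fin c) v, v ∈ (x i).2.1 → color v = i ∧ goodP v := by
        intro x i v hv
        have := (Finset.mem_powersetCard.1 (x i).2.2).1 hv
        exact (Finset.mem_filter.1 this).2
      have hcardTb : ∀ (x : ∀ i : Fin c, {T // T ∈ Tb i} × {U // U ∈ Tg i}) (i : Fin c), ((x i).1.1).card = (ℓ i : ℕ) := fun x i =>
        (Finset.mem_powersetCard.1 (x i).1.2).2
      have hcardTg : ∀ (x : ∀ i : Fin c, {T // T ∈ Tb i} × {U // U ∈ Tg i}) (i : Fin c), ((x i).2.1).card = k i - (ℓ i : ℕ) := fun x i =>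
        (Finset.mem_powersetCard.1 (x i).2.2).2
      have hmemAs : ∀ (x : ∀ i : Fin c, {T // T ∈ Tb i} × {U // U ∈ Tg i}) v, v ∈ As x ↔ ∃ i, v ∈ (x i).1.1 ∨ v ∈ (x i).2.1 := by
        intro x v
        simp [hAs, Finset.mem_biUnion, Finset.mem_union]
      have hrecB : ∀ (x : ∀ i : Fin c, {T // T ∈ Tb i} × {U // U ∈ Tg i}) (i0 : Fin c),
          (As x).filter (fun v => color v = i0 ∧ ¬ goodP v) = (x i0).1.1 := by
        intro x i0
        ext v
        rw [Finset.mem_filter, hmemAs]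
        constructor
        · rintro ⟨⟨i, hv | hv⟩, hcol, hbad⟩
          · have h := hTsub x i v hv
            have hii : i = i0 := h.1.symm.trans hcol
            rw [hii] at hv; exact hv
          · exact absurd (hUsub x i v hv).2 hbad
        · intro hv
          have h := hTsub x i0 v hv
          exact ⟨⟨i0, Or.inl hv⟩, h.1, h.2⟩
      have hrecG : ∀ (x : ∀ i : Fin c, {T // T ∈ Tb i} × {U // U ∈ Tg i}) (i0 : Fin c),
          (As x).filter (fun v => color v = i0 ∧ goodP v) = (x i0).2.1 := by
        intro x i0
        ext v
        rw [Finset.mem_filter, hmemAs]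
        constructor
        · rintro ⟨⟨i, hv | hv⟩, hcol, hgood⟩
          · exact absurd hgood (hTsub x i v hv).2
          · have h := hUsub x i v hv
            have hii : i = i0 := h.1.symm.trans hcol
            rw [hii] at hv; exact hv
        · intro hv
          have h := hUsub x i0 v hv
          exact ⟨⟨i0, Or.inr hv⟩, h.1, h.2⟩
      have hrecC : ∀ (x : ∀ i : Fin c, {T // T ∈ Tb i} × {U // U ∈ Tg i}) (i0 : Fin c),
          (As x).filter (fun v => color v = i0) = (x i0).1.1 ∪ (x i0).2.1 := by
        intro x i0
        ext v
        rw [Finset.mem_filter, hmemAs, Finset.mem_union]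
        constructor
        · rintro ⟨⟨i, hv | hv⟩, hcol⟩
          · have h := hTsub x i v hv
            have hii : i = i0 := h.1.symm.trans hcol
            rw [hii] at hv; exact Or.inl hv
          · have h := hUsub x i v hv
            have hii : i = i0 := h.1.symm.trans hcol
            rw [hii] at hv; exact Or.inr hv
        · rintro (hv | hv)
          · exact ⟨⟨i0, Or.inl hv⟩, (hTsub x i0 v hv).1⟩
          · exact ⟨⟨i0, Or.inr hv⟩, (hUsub x i0 v hv).1⟩
      have hrecBad : ∀ (x : ∀ i : Fin c, {T // T ∈ Tb i} × {U // U ∈ Tg i}), (As x).filter (fun v => ¬ goodP v)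
          = Finset.univ.biUnion fun i => (x i).1.1 := by
        intro x
        ext v
        rw [Finset.mem_filter, hmemAs, Finset.mem_biUnion]
        constructor
        · rintro ⟨⟨i, hv | hv⟩, hbad⟩
          · exact ⟨i, Finset.mem_univ _, hv⟩
          · exact absurd (hUsub x i v hv).2 hbad
        · rintro ⟨i, _, hv⟩
          exact ⟨⟨i, Or.inl hv⟩, (hTsub x i v hv).2⟩
      have hdisjTU : ∀ (x : ∀ i : Fin c, {T // T ∈ Tb i} × {U // U ∈ Tg i}) (i : Fin c), Disjoint ((x i).1.1) ((x i).2.1) := by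
        intro x i
        rw [Finset.disjoint_left]
        intro v hv hv'
        exact absurd (hUsub x i v hv').2 (hTsub x i v hv).2
      have hbadcard : ∀ (x : ∀ i : Fin c, {T // T ∈ Tb i} × {U // U ∈ Tg i}), ((As x).filter (fun v => ¬ goodP v)).card = ∑ i, (ℓ i : ℕ) := by
        intro x
        rw [hrecBad x, Finset.card_biUnion]
        · exact Finset.sum_congr rfl fun i _ => hcardTb x i
        · intro i _ j _ hij
          rw [Function.onFun, Finset.disjoint_left]
          intro v hv hv'
          exact hij ((hTsub x i v hv).1 ▸ (hTsub x j v hv').1 ▸ rfl)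
      have hmemFace : ∀ (x : ∀ i : Fin c, {T // T ∈ Tb i} × {U // U ∈ Tg i}), As x ∈ face ℓ := by
        intro x
        rw [hface, Finset.mem_filter]
        refine ⟨?_, fun i => ?_, fun i => by rw [hrecB x i]; exact hcardTb x i⟩
        · rw [hK, Finset.mem_filter]
          refine ⟨Finset.mem_univ _, ?_⟩
          rw [hbadcard x]
          exact hsumd
        · rw [hrecC x i, Finset.card_union_of_disjoint (hdisjTU x i),
            hcardTb x i, hcardTg x i]
          have := Fin.is_le (ℓ i)
          omega
      have hinj : Function.Injective (fun x => (⟨As x, hmemFace x⟩ : {A // A ∈ face ℓ})) := by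
        intro x y hxy
        have hA : As x = As y := Subtype.ext_iff.1 hxy
        funext i
        refine Prod.ext (Subtype.ext ?_) (Subtype.ext ?_)
        · rw [← hrecB x i, ← hrecB y i, hA]
        · rw [← hrecG x i, ← hrecG y i, hA]
      have hcard := Fintype.card_le_of_injective _ hinj
      rw [Fintype.card_coe, Fintype.card_pi] at hcard
      simp only [Fintype.card_prod, Fintype.card_coe, hTb, hTg, Finset.card_powersetCard,
        hbadC, hgoodC] at hcard
      exact hcard
    -- combine
    have hnat : (∑ ℓ ∈ L, ∏ i, ((n - g i).choose ((ℓ i : ℕ)) * (g i).choose (k i - (ℓ i : ℕ))))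
        ≤ (K.filter fun A => ∀ i, (A.filter fun v => color v = i).card = k i).card :=
      le_trans (Finset.sum_le_sum hlower) hsumle
    have hcast1 : ((binomS.card : ℝ)) ≤ (∏ i, ((n.choose (k i)) : ℝ)) := by
      rw [← Nat.cast_prod]
      exact_mod_cast hbinom
    have hstep1 : α' * (binomS.card : ℝ) ≤ α' * ∏ i, ((n.choose (k i)) : ℝ) :=
      mul_le_mul_of_nonneg_left hcast1 hα'0
    have hcast2 : (∑ ℓ ∈ L, ∏ i, (((n - g i).choose ((ℓ i : ℕ)) : ℝ) *
          (((g i).choose (k i - (ℓ i : ℕ))) : ℝ)))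
        ≤ ((K.filter fun A => ∀ i, (A.filter fun v => color v = i).card = k i).card : ℝ) := by
      have := hnat
      push_cast
      exact_mod_cast hnat
    refine le_trans hstep1 (le_trans ?_ hcast2)
    exact hmain
  · -- dimension bound
    intro i A hA hAmono
    rw [hclassC i]
    have hcardA : A.card ≤ g i + d := by
      have hsplit := Finset.card_filter_add_card_filter_not (s := A) (p := goodP)
      have h1 : (A.filter goodP).card ≤ g i := by
        refine le_trans (Finset.card_le_card ?_) (le_of_eq (hgoodC i))
        intro v hv
        rw [Finset.mem_filter] at hv ⊢
        exact ⟨Finset.mem_univ _, hAmono v hv.1, hv.2⟩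
      have h2 : (A.filter fun v => ¬ goodP v).card ≤ d := by
        simp only [hK, Finset.mem_filter, Finset.mem_univ, true_and] at hA
        exact hA
      omega
    have hceil_lt : (⌈β i * n⌉₊ : ℝ) < β i * n + 1 :=
      Nat.ceil_lt_add_one (mul_nonneg (hβ i).1.le (Nat.cast_nonneg n))
    have hgcast : (g i : ℝ) + (d + 1) = (⌈β i * n⌉₊ : ℝ) := by
      exact_mod_cast congrArg (Nat.cast (R := ℝ)) (hgsum i)
    have : (A.card : ℝ) ≤ (g i : ℝ) + d := by exact_mod_cast hcardA
    linarith
end
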